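/- arXiv:2505.17725 — 2 statements merged into one kernel-verified Lean document; each statement's English description precedes it below -/
import Mathlib

section
/- Let σ, τ be weight functions in the class W₀ with associated weight matrices {S^(ℓ) : ℓ > 0} and {T^(ℓ) : ℓ > 0}. If 0 < γ(σ) = γ̄(σ) < +∞ and 0 < γ(τ) = γ̄(τ) < +∞, then for all ℓ, ℓ₁, ℓ₂, j, j₁, j₂ > 0 one has γ(ω_{S^(ℓ)}) + γ(ω_{T^(j)}) = γ(ω_{S^(ℓ₁)} ⋆̌ ω_{T^(j₁)}) = γ̄(ω_{S^(ℓ₂)} ⋆̌ ω_{T^(j₂)}). -/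
open Real Filter Asymptotics Set
open scoped ENNReal Topology

noncomputable section

/-- A weight function: nonnegative, non-decreasing on `[0,∞)`, tending to `+∞`. -/
def IsWeightFct (ω : ℝ → ℝ) : Prop :=
  (∀ t : ℝ, 0 ≤ ω t) ∧ MonotoneOn ω (Ici (0:ℝ)) ∧ Tendsto ω atTop atTop

/-- Condition `(ω₁)`: `ω(2t) = O(ω(t))`. -/
def HasOm1 (ω : ℝ → ℝ) : Prop :=
  ∃ L : ℝ, 1 ≤ L ∧ ∀ t : ℝ, 0 ≤ t → ω (2 * t) ≤ L * (ω t + 1)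

/-- Condition `(ω₆)`. -/
def HasOm6 (ω : ℝ → ℝ) : Prop :=
  ∃ H : ℝ, 1 ≤ H ∧ ∀ t : ℝ, 0 ≤ t → 2 * ω t ≤ ω (H * t) + H

/-- The class `W₀` of (normalized) Braun-Meise-Taylor weight functions. -/
def IsW0 (ω : ℝ → ℝ) : Prop :=
  IsWeightFct ω ∧ ContinuousOn ω (Ici (0:ℝ)) ∧ (∀ t ∈ Icc (0:ℝ) 1, ω t = 0) ∧
    ((fun t : ℝ => Real.log t) =o[atTop] ω) ∧
    ConvexOn ℝ univ (fun y : ℝ => ω (Real.exp y))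

/-- Legendre-Fenchel-Young conjugate `φ*_ω`. -/
def phiStar (ω : ℝ → ℝ) (x : ℝ) : ℝ :=
  sSup {z : ℝ | ∃ y : ℝ, 0 ≤ y ∧ z = x * y - ω (Real.exp y)}

/-- The sequence `W^(ℓ)` of the associated weight matrix of `ω`. -/
def assocSeq (ω : ℝ → ℝ) (ℓ : ℝ) (p : ℕ) : ℝ :=
  Real.exp ((1 / ℓ) * phiStar ω (ℓ * (p : ℝ)))

/-- The weight function `ω_M` associated with a sequence `M`. -/
def omegaSeq (M : ℕ → ℝ) (t : ℝ) : ℝ :=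
  sSup {z : ℝ | ∃ p : ℕ, z = Real.log (t ^ p / M p)}

/-- Property `(P_{ω,γ})`. -/
def gammaProp (ω : ℝ → ℝ) (g : ℝ) : Prop :=
  ∃ K : ℝ, 1 < K ∧
    limsup (fun t : ℝ => ((ω (K ^ g * t) / ω t : ℝ) : EReal)) atTop < (K : EReal)

/-- Property `(P̄_{ω,γ})`. -/
def gammaBarProp (ω : ℝ → ℝ) (g : ℝ) : Prop :=
  ∃ A : ℝ, 1 < A ∧
    (A : EReal) < liminf (fun t : ℝ => ((ω (A ^ g * t) / ω t : ℝ) : EReal)) atTop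

/-- The growth index `γ(ω) ∈ [0,∞]`. -/
def gammaIdx (ω : ℝ → ℝ) : ℝ≥0∞ :=
  ⨆ (g : ℝ) (_ : 0 < g ∧ gammaProp ω g), ENNReal.ofReal g

/-- The growth index `γ̄(ω) ∈ [0,∞]` (`+∞` if no admissible `γ` exists). -/
def gammaBarIdx (ω : ℝ → ℝ) : ℝ≥0∞ :=
  sInf (ENNReal.ofReal '' {g : ℝ | 0 < g ∧ gammaBarProp ω g})

/-- Generalized lower Legendre conjugate `σ ⋆̌ τ`. -/
def lowerConj (σ τ : ℝ → ℝ) (t : ℝ) : ℝ :=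
  sInf {z : ℝ | ∃ s : ℝ, 0 < s ∧ z = σ s + τ (t / s)}

/-- Generalized upper Legendre conjugate `σ ⋆̂ τ`. -/
def upperConj (σ τ : ℝ → ℝ) (t : ℝ) : ℝ :=
  if t = 0 then σ 0 - τ 0 else sSup {z : ℝ | ∃ s : ℝ, 0 ≤ s ∧ z = σ s - τ (s / t)}

/-- `σ ⋆̂ τ` is well-defined, i.e. `σ⋆̂τ(t) < +∞` for every `t`. -/
def UpperConjWD (σ τ : ℝ → ℝ) : Prop :=
  ∀ t : ℝ, 0 < t → BddAbove {z : ℝ | ∃ s : ℝ, 0 ≤ s ∧ z = σ s - τ (s / t)}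

/-- Lower Legendre envelope `h_⋆`. -/
def lowerEnv (h : ℝ → ℝ) (t : ℝ) : ℝ :=
  sInf {z : ℝ | ∃ u : ℝ, 0 < u ∧ z = h u + t * u}

/-- Upper Legendre envelope `h^⋆`. -/
def upperEnv (h : ℝ → ℝ) (t : ℝ) : ℝ :=
  sSup {z : ℝ | ∃ s : ℝ, 0 ≤ s ∧ z = h s - t * s}

/-- `(((ω^ι)^α)_⋆)^{1/α}` (which equals `ω ⋆̌ id^{1/α}`). -/
def lowerCompose (ω : ℝ → ℝ) (α : ℝ) (t : ℝ) : ℝ :=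
  lowerEnv (fun u : ℝ => ω (1 / u ^ α)) (t ^ (1 / α))

/-- `(((ω^α)^⋆)^ι)^{1/α}` (which equals `ω ⋆̂ id^{1/α}`). -/
def upperCompose (ω : ℝ → ℝ) (α : ℝ) (t : ℝ) : ℝ :=
  upperEnv (fun s : ℝ => ω (s ^ α)) (1 / t ^ (1 / α))

/-- Equivalence `σ ∼ τ` of weight functions. -/
def WeightEquiv (σ τ : ℝ → ℝ) : Prop :=
  σ =O[atTop] τ ∧ τ =O[atTop] σ

/-- Relation `M ≼ N` for sequences: `sup_{p ≥ 1} (M_p/N_p)^{1/p} < ∞`. -/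
def seqPrec (M N : ℕ → ℝ) : Prop :=
  ∃ C : ℝ, ∀ p : ℕ, 1 ≤ p → (M p / N p) ^ (1 / (p : ℝ)) ≤ C

/-- Relation `M ◁ N` for sequences: `(M_p/N_p)^{1/p} → 0`. -/
def seqTriangle (M N : ℕ → ℝ) : Prop :=
  Tendsto (fun p : ℕ => (M p / N p) ^ (1 / (p : ℝ))) atTop (𝓝 0)

/-- Equivalence `M ≈ N` of sequences. -/
def seqEquiv (M N : ℕ → ℝ) : Prop := seqPrec M N ∧ seqPrec N M

/-- The Gevrey sequence `G^α`. -/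
def gevrey (α : ℝ) (p : ℕ) : ℝ := (p.factorial : ℝ) ^ α

/-- The quotient sequence `μ_p = M_p / M_{p-1}`, `μ₀ = 1`. -/
def quotSeq (M : ℕ → ℝ) : ℕ → ℝ
  | 0 => 1
  | (p + 1) => M (p + 1) / M p

/-- Condition `(β,Q)`: `liminf_{p} μ_{Qp}/μ_p > Q^β`. -/
def condBQ (M : ℕ → ℝ) (β : ℝ) (Q : ℕ) : Prop :=
  ((((Q : ℝ) ^ β : ℝ)) : EReal) <
    liminf (fun p : ℕ => ((quotSeq M (Q * p) / quotSeq M p : ℝ) : EReal)) atTop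

/-- Thilliez's growth index `γ(M) ∈ [0,∞]`. -/
def thilliezIdx (M : ℕ → ℝ) : ℝ≥0∞ :=
  ⨆ (β : ℝ) (_ : 0 ≤ β ∧ ∃ Q : ℕ, 2 ≤ Q ∧ condBQ M β Q), ENNReal.ofReal β

/-- The Beurling Gelfand-Shilov space `S_(σ)(ℝ)` (membership predicate). -/
def MemSBeurling (σ : ℝ → ℝ) (f : ℝ → ℂ) : Prop :=
  ContDiff ℝ (⊤ : ℕ∞) f ∧ ∀ ℓ : ℝ, 0 < ℓ → ∃ C : ℝ, ∀ x : ℝ, ∀ j k : ℕ,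
    (1 + |x|) ^ k * ‖iteratedDeriv j f x‖ ≤ C * assocSeq σ ℓ (j + k)

/-- The polynomial `ψ(x) = x² + 1/4`. -/
def psiMap (x : ℝ) : ℝ := x ^ 2 + 1 / 4

/-- The resolvent operator `R_μ = ∑_m C_{ψ_m}/μ^{m+1}`. -/
def Rres (μ : ℂ) (f : ℝ → ℂ) (x : ℝ) : ℂ :=
  ∑' m : ℕ, (μ ^ (m + 1))⁻¹ * f (psiMap^[m] x)

/-- Auxiliary upper regularity property. -/
def UBp (ω : ℝ → ℝ) (g : ℝ) : Prop :=
  ∃ C T : ℝ, 1 ≤ C ∧ 1 ≤ T ∧ ∀ t : ℝ, T ≤ t →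
    0 ≤ ω t ∧ ∀ l : ℝ, 1 ≤ l → ω (l * t) ≤ C * l ^ (1 / g) * ω t

/-- Auxiliary lower regularity property. -/
def LBp (ω : ℝ → ℝ) (g : ℝ) : Prop :=
  ∃ c T : ℝ, 0 < c ∧ 1 ≤ T ∧ ∀ t : ℝ, T ≤ t →
    0 ≤ ω t ∧ ∀ l : ℝ, 1 ≤ l → c * l ^ (1 / g) * ω t ≤ ω (l * t)

/-- Weak weight-type hypotheses. -/
structure Wk (ω : ℝ → ℝ) : Prop where
  mono : MonotoneOn ω (Ici (1:ℝ))
  tend : Tendsto ω atTop atTop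

lemma one_le_rpow' {x y : ℝ} (hx : 1 ≤ x) (hy : 0 ≤ y) : 1 ≤ x ^ y := by
  calc (1:ℝ) = x ^ (0:ℝ) := (Real.rpow_zero x).symm
  _ ≤ x ^ y := Real.rpow_le_rpow_of_exponent_le hx hy

lemma UBp_anti {ω : ℝ → ℝ} {g g' : ℝ} (hg' : 0 < g') (hle : g' ≤ g) (h : UBp ω g) :
    UBp ω g' := by
  obtain ⟨C, T, hC, hT, h⟩ := h
  refine ⟨C, T, hC, hT, fun t ht => ⟨(h t ht).1, fun l hl => ?_⟩⟩
  have h1 : l ^ (1/g) ≤ l ^ (1/g') :=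
    Real.rpow_le_rpow_of_exponent_le hl (one_div_le_one_div_of_le hg' hle)
  have h2 := (h t ht).2 l hl
  have hωt := (h t ht).1
  nlinarith [h2, mul_le_mul_of_nonneg_left h1 (le_trans zero_le_one hC)]

lemma LBp_mono {ω : ℝ → ℝ} {g g' : ℝ} (hg : 0 < g) (hle : g ≤ g') (h : LBp ω g) :
    LBp ω g' := by
  obtain ⟨c, T, hc, hT, h⟩ := h
  refine ⟨c, T, hc, hT, fun t ht => ⟨(h t ht).1, fun l hl => ?_⟩⟩
  have h1 : l ^ (1/g') ≤ l ^ (1/g) :=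
    Real.rpow_le_rpow_of_exponent_le hl (one_div_le_one_div_of_le hg hle)
  have h2 := (h t ht).2 l hl
  have hωt := (h t ht).1
  nlinarith [mul_le_mul_of_nonneg_left h1 hc.le]

lemma Wk.large {ω : ℝ → ℝ} (hw : Wk ω) (b T₀ : ℝ) :
    ∃ T : ℝ, 1 ≤ T ∧ T₀ ≤ T ∧ ∀ t, T ≤ t → b ≤ ω t := by
  obtain ⟨T₁, hT₁⟩ := eventually_atTop.mp (hw.tend.eventually_ge_atTop b)
  exact ⟨max T₁ (max 1 T₀), le_trans (le_max_left _ _) (le_max_right _ _),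
    le_trans (le_max_right _ _) (le_max_right _ _),
    fun t ht => hT₁ t (le_trans (le_max_left _ _) ht)⟩

lemma gammaProp_UBp {ω : ℝ → ℝ} {g : ℝ} (hw : Wk ω) (hg : 0 < g)
    (h : gammaProp ω g) : UBp ω g := by
  obtain ⟨K, hK, hls⟩ := h
  have hK0 : (0:ℝ) < K := lt_trans one_pos hK
  have hlogK : 0 < Real.log K := Real.log_pos hK
  have hKg : 1 ≤ K ^ g := one_le_rpow' hK.le hg.le
  have hev : ∀ᶠ t : ℝ in atTop, ((ω (K ^ g * t) / ω t : ℝ) : EReal) < (K : EReal) :=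
    eventually_lt_of_limsup_lt hls
  have hev2 : ∀ᶠ t : ℝ in atTop, 1 ≤ ω t := hw.tend.eventually_ge_atTop 1
  obtain ⟨T₁, hT₁⟩ := eventually_atTop.mp (hev.and hev2)
  set T := max T₁ 1 with hTdef
  have hT1 : (1:ℝ) ≤ T := le_max_right _ _
  have hTall : ∀ t, T ≤ t → (ω (K ^ g * t) ≤ K * ω t ∧ 1 ≤ ω t) := by
    intro t ht
    obtain ⟨h1, h2⟩ := hT₁ t (le_trans (le_max_left _ _) ht)
    have hpos : 0 < ω t := lt_of_lt_of_le one_pos h2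
    have h3 : ω (K ^ g * t) / ω t < K := EReal.coe_lt_coe_iff.mp h1
    exact ⟨((div_lt_iff₀ hpos).mp h3).le, h2⟩
  have hiter : ∀ n : ℕ, ∀ t, T ≤ t → ω ((K ^ g) ^ n * t) ≤ K ^ n * ω t := by
    intro n
    induction n with
    | zero => intro t ht; simp
    | succ n ih =>
      intro t ht
      have ht1 : (1:ℝ) ≤ t := le_trans hT1 ht
      have ht0 : 0 < t := lt_of_lt_of_le one_pos ht1
      have h1 : (1:ℝ) ≤ (K ^ g) ^ n := one_le_pow₀ hKg
      have hgt : T ≤ (K ^ g) ^ n * t := le_trans ht (by nlinarith)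
      have e1 : (K ^ g) ^ (n+1) * t = K ^ g * ((K ^ g) ^ n * t) := by ring
      calc ω ((K ^ g) ^ (n+1) * t) = ω (K ^ g * ((K ^ g) ^ n * t)) := by rw [e1]
      _ ≤ K * ω ((K ^ g) ^ n * t) := (hTall _ hgt).1
      _ ≤ K * (K ^ n * ω t) := by nlinarith [ih t ht]
      _ = K ^ (n+1) * ω t := by ring
  refine ⟨K, T, hK.le, hT1, fun t ht => ⟨le_trans zero_le_one (hTall t ht).2, ?_⟩⟩
  intro l hl
  have hl0 : (0:ℝ) < l := lt_of_lt_of_le one_pos hl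
  have hll : 0 ≤ Real.log l := Real.log_nonneg hl
  have hd : 0 < g * Real.log K := mul_pos hg hlogK
  set n := ⌈Real.log l / (g * Real.log K)⌉₊ with hn
  have ht1 : (1:ℝ) ≤ t := le_trans hT1 ht
  have ht0 : (0:ℝ) < t := lt_of_lt_of_le one_pos ht1
  have eKg : (K ^ g : ℝ) ^ n = Real.exp ((n : ℝ) * (g * Real.log K)) := by
    rw [Real.rpow_def_of_pos hK0, mul_comm (Real.log K) g, ← Real.exp_nat_mul]
  have h1 : l ≤ (K ^ g) ^ n := by
    have hc := Nat.le_ceil (Real.log l / (g * Real.log K))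
    have hlog : Real.log l ≤ (n : ℝ) * (g * Real.log K) := by
      rw [div_le_iff₀ hd] at hc; exact hc
    calc l = Real.exp (Real.log l) := (Real.exp_log hl0).symm
    _ ≤ Real.exp ((n : ℝ) * (g * Real.log K)) := Real.exp_le_exp.mpr hlog
    _ = (K ^ g) ^ n := eKg.symm
  have h2 : (K : ℝ) ^ n ≤ K * l ^ (1/g) := by
    have hc : (n : ℝ) < Real.log l / (g * Real.log K) + 1 :=
      Nat.ceil_lt_add_one (by positivity)
    have : (n : ℝ) * Real.log K ≤ (Real.log l / (g * Real.log K) + 1) * Real.log K :=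
      mul_le_mul_of_nonneg_right hc.le hlogK.le
    calc (K:ℝ) ^ n = Real.exp ((n:ℝ) * Real.log K) := by
          rw [Real.exp_nat_mul, Real.exp_log hK0]
    _ ≤ Real.exp ((Real.log l / (g * Real.log K) + 1) * Real.log K) := Real.exp_le_exp.mpr this
    _ = Real.exp (Real.log l * (1/g)) * K := by
        rw [← Real.exp_log hK0, ← Real.exp_add]
        congr 1
        have := Real.exp_log hK0
        field_simp
        rw [mul_add, mul_div_assoc', mul_div_right_comm]; simp only [Real.log_exp, this]; rw [div_self hlogK.ne', one_mul]; ring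
    _ = l ^ (1/g) * K := by rw [Real.rpow_def_of_pos hl0]
    _ = K * l ^ (1/g) := by ring
  have hmono := hw.mono
  have hle1 : l * t ≤ (K ^ g) ^ n * t := mul_le_mul_of_nonneg_right h1 ht0.le
  have hmem1 : l * t ∈ Ici (1:ℝ) := by
    simp only [mem_Ici]; nlinarith
  have hmem2 : (K ^ g) ^ n * t ∈ Ici (1:ℝ) := by
    simp only [mem_Ici]
    have : (1:ℝ) ≤ (K ^ g) ^ n := one_le_pow₀ hKg
    nlinarith
  have hωt : 0 ≤ ω t := le_trans zero_le_one (hTall t ht).2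
  calc ω (l * t) ≤ ω ((K ^ g) ^ n * t) := hmono hmem1 hmem2 hle1
  _ ≤ K ^ n * ω t := hiter n t ht
  _ ≤ (K * l ^ (1/g)) * ω t := mul_le_mul_of_nonneg_right h2 hωt
  _ = K * l ^ (1/g) * ω t := by ring

lemma gammaBarProp_LBp {ω : ℝ → ℝ} {g : ℝ} (hw : Wk ω) (hg : 0 < g)
    (h : gammaBarProp ω g) : LBp ω g := by
  obtain ⟨A, hA, hls⟩ := h
  have hA0 : (0:ℝ) < A := lt_trans one_pos hA
  have hlogA : 0 < Real.log A := Real.log_pos hA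
  have hAg : 1 ≤ A ^ g := one_le_rpow' hA.le hg.le
  have hev : ∀ᶠ t : ℝ in atTop, (A : EReal) < ((ω (A ^ g * t) / ω t : ℝ) : EReal) :=
    eventually_lt_of_lt_liminf hls
  have hev2 : ∀ᶠ t : ℝ in atTop, 1 ≤ ω t := hw.tend.eventually_ge_atTop 1
  obtain ⟨T₁, hT₁⟩ := eventually_atTop.mp (hev.and hev2)
  set T := max T₁ 1 with hTdef
  have hT1 : (1:ℝ) ≤ T := le_max_right _ _
  have hTall : ∀ t, T ≤ t → (A * ω t ≤ ω (A ^ g * t) ∧ 1 ≤ ω t) := by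
    intro t ht
    obtain ⟨h1, h2⟩ := hT₁ t (le_trans (le_max_left _ _) ht)
    have hpos : 0 < ω t := lt_of_lt_of_le one_pos h2
    have h3 : A < ω (A ^ g * t) / ω t := EReal.coe_lt_coe_iff.mp h1
    exact ⟨((lt_div_iff₀ hpos).mp h3).le, h2⟩
  have hiter : ∀ n : ℕ, ∀ t, T ≤ t → A ^ n * ω t ≤ ω ((A ^ g) ^ n * t) := by
    intro n
    induction n with
    | zero => intro t ht; simp
    | succ n ih =>
      intro t ht
      have ht1 : (1:ℝ) ≤ t := le_trans hT1 ht
      have ht0 : 0 < t := lt_of_lt_of_le one_pos ht1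
      have h1 : (1:ℝ) ≤ (A ^ g) ^ n := one_le_pow₀ hAg
      have hgt : T ≤ (A ^ g) ^ n * t := le_trans ht (by nlinarith)
      have e1 : (A ^ g) ^ (n+1) * t = A ^ g * ((A ^ g) ^ n * t) := by ring
      have hA0n : (0:ℝ) < A ^ n := pow_pos hA0 n
      calc A ^ (n+1) * ω t = A * (A ^ n * ω t) := by ring
      _ ≤ A * ω ((A ^ g) ^ n * t) := by nlinarith [ih t ht]
      _ ≤ ω (A ^ g * ((A ^ g) ^ n * t)) := (hTall _ hgt).1
      _ = ω ((A ^ g) ^ (n+1) * t) := by rw [e1]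
  refine ⟨1/A, T, by positivity, hT1, fun t ht => ⟨le_trans zero_le_one (hTall t ht).2, ?_⟩⟩
  intro l hl
  have hl0 : (0:ℝ) < l := lt_of_lt_of_le one_pos hl
  have hll : 0 ≤ Real.log l := Real.log_nonneg hl
  have hd : 0 < g * Real.log A := mul_pos hg hlogA
  set n := ⌊Real.log l / (g * Real.log A)⌋₊ with hn
  have ht1 : (1:ℝ) ≤ t := le_trans hT1 ht
  have ht0 : (0:ℝ) < t := lt_of_lt_of_le one_pos ht1
  have eAg : (A ^ g : ℝ) ^ n = Real.exp ((n : ℝ) * (g * Real.log A)) := by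
    rw [Real.rpow_def_of_pos hA0, mul_comm (Real.log A) g, ← Real.exp_nat_mul]
  have h1 : (A ^ g) ^ n ≤ l := by
    have hc := Nat.floor_le (a := Real.log l / (g * Real.log A)) (by positivity)
    have hlog : (n : ℝ) * (g * Real.log A) ≤ Real.log l := by
      rw [← le_div_iff₀ hd]; exact hc
    calc (A ^ g) ^ n = Real.exp ((n : ℝ) * (g * Real.log A)) := eAg
    _ ≤ Real.exp (Real.log l) := Real.exp_le_exp.mpr hlog
    _ = l := Real.exp_log hl0
  have h2 : (1/A) * l ^ (1/g) ≤ (A : ℝ) ^ n := by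
    have hc : Real.log l / (g * Real.log A) < (n : ℝ) + 1 := Nat.lt_floor_add_one _
    have h3 : (Real.log l / (g * Real.log A) - 1) * Real.log A ≤ (n : ℝ) * Real.log A := by
      nlinarith
    calc (1/A) * l ^ (1/g) = Real.exp (Real.log l * (1/g) + (- Real.log A)) := by
          rw [Real.exp_add, Real.exp_neg, Real.exp_log hA0, Real.rpow_def_of_pos hl0]; ring
    _ = Real.exp ((Real.log l / (g * Real.log A) - 1) * Real.log A) := by
        congr 1
        have hlA : Real.log A ≠ 0 := ne_of_gt hlogA
        field_simp
        ring
    _ ≤ Real.exp ((n : ℝ) * Real.log A) := Real.exp_le_exp.mpr h3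
    _ = A ^ n := by rw [Real.exp_nat_mul, Real.exp_log hA0]
  have hle1 : (A ^ g) ^ n * t ≤ l * t := mul_le_mul_of_nonneg_right h1 ht0.le
  have hmem2 : l * t ∈ Ici (1:ℝ) := by simp only [mem_Ici]; nlinarith
  have hmem1 : (A ^ g) ^ n * t ∈ Ici (1:ℝ) := by
    simp only [mem_Ici]
    have : (1:ℝ) ≤ (A ^ g) ^ n := one_le_pow₀ hAg
    nlinarith
  have hωt : 0 ≤ ω t := le_trans zero_le_one (hTall t ht).2
  calc (1/A) * l ^ (1/g) * ω t ≤ A ^ n * ω t := mul_le_mul_of_nonneg_right h2 hωt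
  _ ≤ ω ((A ^ g) ^ n * t) := hiter n t ht
  _ ≤ ω (l * t) := hw.mono hmem1 hmem2 hle1

lemma UBp_gammaProp {ω : ℝ → ℝ} {g g' : ℝ} (hg' : 0 < g') (hlt : g' < g)
    (h : UBp ω g) : gammaProp ω g' := by
  obtain ⟨C, T, hC, hT, hU⟩ := h
  have hg : 0 < g := lt_trans hg' hlt
  have hC0 : (0:ℝ) < C := lt_of_lt_of_le one_pos hC
  have hgg : 0 < g - g' := by linarith
  set K := C ^ (g / (g - g')) + 1 with hKdef
  have hCp : (0:ℝ) < C ^ (g / (g - g')) := Real.rpow_pos_of_pos hC0 _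
  have hK1 : 1 < K := by
    have : (1:ℝ) ≤ C ^ (g / (g - g')) := one_le_rpow' hC (by positivity)
    simp only [hKdef]; linarith
  have hK0 : (0:ℝ) < K := lt_trans one_pos hK1
  have hkey : C * K ^ (g' / g) < K := by
    have h1 : C < K ^ ((g - g') / g) := by
      have hlt2 : C ^ (g / (g - g')) < K := by simp only [hKdef]; linarith
      have := Real.rpow_lt_rpow (le_of_lt hCp) hlt2 (by positivity : (0:ℝ) < (g - g')/g)
      rwa [← Real.rpow_mul hC0.le, show (g/(g-g')) * ((g-g')/g) = 1 by field_simp,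
        Real.rpow_one] at this
    have h2 : K ^ ((g - g') / g) * K ^ (g' / g) = K := by
      rw [← Real.rpow_add hK0, show (g-g')/g + g'/g = 1 by field_simp; ring, Real.rpow_one]
    have h3 : 0 < K ^ (g' / g) := Real.rpow_pos_of_pos hK0 _
    calc C * K ^ (g' / g) < K ^ ((g - g') / g) * K ^ (g' / g) :=
          mul_lt_mul_of_pos_right h1 h3
    _ = K := h2
  refine ⟨K, hK1, ?_⟩
  have hc0 : 0 ≤ C * K ^ (g' / g) := by positivity
  have hev : ∀ᶠ t : ℝ in atTop,
      ((ω (K ^ g' * t) / ω t : ℝ) : EReal) ≤ ((C * K ^ (g'/g) : ℝ) : EReal) := by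
    filter_upwards [eventually_ge_atTop T] with t ht
    rw [EReal.coe_le_coe_iff]
    rcases eq_or_lt_of_le (hU t ht).1 with h0 | h0
    · rw [← h0]; simp [hc0]
    · rw [div_le_iff₀ h0]
      have hKl : 1 ≤ K ^ g' := one_le_rpow' hK1.le hg'.le
      have := (hU t ht).2 (K ^ g') hKl
      rwa [← Real.rpow_mul hK0.le, show g' * (1/g) = g'/g by ring] at this
  have hls := limsup_le_of_le (by isBoundedDefault) hev
  exact lt_of_le_of_lt hls (EReal.coe_lt_coe_iff.mpr hkey)

lemma LBp_gammaBarProp {ω : ℝ → ℝ} {g g' : ℝ} (hw : Wk ω) (hg : 0 < g) (hlt : g < g')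
    (h : LBp ω g) : gammaBarProp ω g' := by
  obtain ⟨c, T, hc, hT, hL⟩ := h
  have hg' : 0 < g' := lt_trans hg hlt
  have hgg : 0 < g' - g := by linarith
  set A := (1/c) ^ (g / (g' - g)) + 2 with hAdef
  have hcp : (0:ℝ) < (1/c) ^ (g / (g' - g)) := Real.rpow_pos_of_pos (by positivity) _
  have hA1 : 1 < A := by simp only [hAdef]; linarith
  have hA0 : (0:ℝ) < A := lt_trans one_pos hA1
  have hkey : A < c * A ^ (g' / g) := by
    have h1 : 1/c < A ^ ((g' - g) / g) := by
      have hlt2 : (1/c) ^ (g / (g' - g)) < A := by simp only [hAdef]; linarith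
      have := Real.rpow_lt_rpow (le_of_lt hcp) hlt2 (by positivity : (0:ℝ) < (g' - g)/g)
      rwa [← Real.rpow_mul (by positivity : (0:ℝ) ≤ 1/c),
        show (g/(g'-g)) * ((g'-g)/g) = 1 by field_simp, Real.rpow_one] at this
    have h2 : A ^ ((g' - g) / g) * A ^ (g / g) = A ^ (g' / g) := by
      rw [← Real.rpow_add hA0]; congr 1; field_simp; ring
    have h3 : A ^ (g / g) = A := by
      rw [show g/g = (1:ℝ) by field_simp, Real.rpow_one]
    have h4 : c * A ^ ((g' - g)/g) > 1 := by
      rw [gt_iff_lt, ← div_lt_iff₀' hc]; exact h1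
    calc A = 1 * A := (one_mul A).symm
    _ < (c * A ^ ((g' - g)/g)) * A := mul_lt_mul_of_pos_right h4 hA0
    _ = c * (A ^ ((g' - g)/g) * A ^ (g/g)) := by rw [h3]; ring
    _ = c * A ^ (g' / g) := by rw [h2]
  refine ⟨A, hA1, ?_⟩
  have hev : ∀ᶠ t : ℝ in atTop,
      ((c * A ^ (g'/g) : ℝ) : EReal) ≤ ((ω (A ^ g' * t) / ω t : ℝ) : EReal) := by
    have hev2 : ∀ᶠ t : ℝ in atTop, 1 ≤ ω t := hw.tend.eventually_ge_atTop 1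
    filter_upwards [eventually_ge_atTop T, hev2] with t ht h1t
    rw [EReal.coe_le_coe_iff]
    have h0 : (0:ℝ) < ω t := lt_of_lt_of_le one_pos h1t
    rw [le_div_iff₀ h0]
    have hAl : 1 ≤ A ^ g' := one_le_rpow' hA1.le hg'.le
    have := (hL t ht).2 (A ^ g') hAl
    rwa [← Real.rpow_mul hA0.le, show g' * (1/g) = g'/g by ring] at this
  have hls := le_liminf_of_le (by isBoundedDefault) hev
  exact lt_of_lt_of_le (EReal.coe_lt_coe_iff.mpr hkey) hls

lemma UBp_le_LBp {ω : ℝ → ℝ} {g₁ g₂ : ℝ} (hw : Wk ω) (hg₁ : 0 < g₁) (hg₂ : 0 < g₂)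
    (hU : UBp ω g₁) (hL : LBp ω g₂) : g₁ ≤ g₂ := by
  by_contra hcon
  push_neg at hcon
  obtain ⟨C, T₁, hC, hT₁, hU⟩ := hU
  obtain ⟨c, T₂, hc, hT₂, hL⟩ := hL
  have hC0 : (0:ℝ) < C := lt_of_lt_of_le one_pos hC
  set e := 1/g₂ - 1/g₁ with hedef
  have he : 0 < e := by
    simp only [hedef, sub_pos]
    exact one_div_lt_one_div_of_lt hg₂ hcon
  obtain ⟨T, hT1, hTs, hTb⟩ := hw.large 1 (max T₁ T₂)
  set t := T with ht
  have htT₁ : T₁ ≤ t := le_trans (le_max_left _ _) hTs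
  have htT₂ : T₂ ≤ t := le_trans (le_max_right _ _) hTs
  have hωt : 1 ≤ ω t := hTb t le_rfl
  set l := (C/c) ^ (1/e) + 1 with hldef
  have hCc : (0:ℝ) < (C/c) ^ (1/e) := Real.rpow_pos_of_pos (by positivity) _
  have hl1 : 1 ≤ l := by simp only [hldef]; linarith
  have hl0 : (0:ℝ) < l := lt_of_lt_of_le one_pos hl1
  have hkey : C/c < l ^ e := by
    have hlt2 : (C/c) ^ (1/e) < l := by simp only [hldef]; linarith
    have := Real.rpow_lt_rpow (le_of_lt hCc) hlt2 he
    rwa [← Real.rpow_mul (by positivity : (0:ℝ) ≤ C/c),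
      show (1/e) * e = 1 by field_simp, Real.rpow_one] at this
  have h1 := (hU t htT₁).2 l hl1
  have h2 := (hL t htT₂).2 l hl1
  have h3 : c * l ^ (1/g₂) ≤ C * l ^ (1/g₁) := by
    have h4 : c * l ^ (1/g₂) * ω t ≤ C * l ^ (1/g₁) * ω t := le_trans h2 h1
    have h5 : (0:ℝ) < ω t := lt_of_lt_of_le one_pos hωt
    exact le_of_mul_le_mul_right h4 h5
  have h6 : l ^ (1/g₂) = l ^ (1/g₁) * l ^ e := by
    rw [← Real.rpow_add hl0]; congr 1; simp [hedef]
  have h7 : 0 < l ^ (1/g₁) := Real.rpow_pos_of_pos hl0 _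
  have h8 : c * l ^ e ≤ C := by
    rw [h6] at h3
    have : c * l ^ e * l ^ (1/g₁) ≤ C * l ^ (1/g₁) := by ring_nf; ring_nf at h3; linarith
    exact le_of_mul_le_mul_right this h7
  rw [div_lt_iff₀' hc] at hkey
  linarith

lemma idx_eq {ω : ℝ → ℝ} {r : ℝ} (hw : Wk ω) (hr : 0 < r)
    (hU : ∀ g, 0 < g → g < r → UBp ω g) (hL : ∀ g, r < g → LBp ω g) :
    gammaIdx ω = ENNReal.ofReal r ∧ gammaBarIdx ω = ENNReal.ofReal r := by
  have hgp : ∀ g, 0 < g → g < r → gammaProp ω g := fun g hg hgr =>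
    UBp_gammaProp hg (by linarith : g < (g+r)/2) (hU ((g+r)/2) (by linarith) (by linarith))
  have hbp : ∀ g, r < g → gammaBarProp ω g := fun g hgr =>
    LBp_gammaBarProp hw (by linarith : (0:ℝ) < (r+g)/2) (by linarith)
      (hL ((r+g)/2) (by linarith))
  have hle : ∀ g, 0 < g → gammaProp ω g → g ≤ r := by
    intro g hg hp
    by_contra hcon; push_neg at hcon
    have h2 : LBp ω ((r+g)/2) := hL _ (by linarith)
    have := UBp_le_LBp hw hg (by linarith) (gammaProp_UBp hw hg hp) h2
    linarith
  have hge : ∀ g, 0 < g → gammaBarProp ω g → r ≤ g := by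
    intro g hg hp
    by_contra hcon; push_neg at hcon
    have h2 : UBp ω ((g+r)/2) := hU _ (by linarith) (by linarith)
    have := UBp_le_LBp hw (by linarith) hg h2 (gammaBarProp_LBp hw hg hp)
    linarith
  constructor
  · apply le_antisymm
    · apply iSup_le; intro g; apply iSup_le; intro hgp'
      exact ENNReal.ofReal_le_ofReal (hle g hgp'.1 hgp'.2)
    · by_contra hcon
      push_neg at hcon
      have hXne : gammaIdx ω ≠ ⊤ := by
        intro h; rw [h] at hcon; exact not_top_lt hcon
      have hXr : (gammaIdx ω).toReal < r := by
        have := (ENNReal.toReal_lt_toReal hXne ENNReal.ofReal_ne_top).mpr hcon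
        rwa [ENNReal.toReal_ofReal hr.le] at this
      set g' := ((gammaIdx ω).toReal + r)/2 with hg'def
      have hXnn : 0 ≤ (gammaIdx ω).toReal := ENNReal.toReal_nonneg
      have hg'p : 0 < g' := by simp only [hg'def]; linarith
      have hg'r : g' < r := by simp only [hg'def]; linarith
      have h1 : gammaProp ω g' := hgp g' hg'p hg'r
      have h2 : ENNReal.ofReal g' ≤ gammaIdx ω :=
        le_iSup₂ (f := fun g (_ : 0 < g ∧ gammaProp ω g) => ENNReal.ofReal g) g' ⟨hg'p, h1⟩
      have h3 : gammaIdx ω < ENNReal.ofReal g' := by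
        calc gammaIdx ω = ENNReal.ofReal (gammaIdx ω).toReal :=
              (ENNReal.ofReal_toReal hXne).symm
        _ < ENNReal.ofReal g' := (ENNReal.ofReal_lt_ofReal_iff hg'p).mpr
              (by simp only [hg'def]; linarith)
      exact absurd h2 (not_le.mpr h3)
  · apply le_antisymm
    · by_contra hcon; push_neg at hcon
      have hub : ∀ g, r < g → gammaBarIdx ω ≤ ENNReal.ofReal g := by
        intro g hg
        exact sInf_le ⟨g, ⟨lt_trans hr hg, hbp g hg⟩, rfl⟩
      have hXne : gammaBarIdx ω ≠ ⊤ := by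
        intro h
        have h5 := hub (r+1) (by linarith)
        rw [h, top_le_iff] at h5
        exact ENNReal.ofReal_ne_top h5
      have hXr : r < (gammaBarIdx ω).toReal := by
        have := (ENNReal.toReal_lt_toReal ENNReal.ofReal_ne_top hXne).mpr hcon
        rwa [ENNReal.toReal_ofReal hr.le] at this
      set g' := (r + (gammaBarIdx ω).toReal)/2 with hg'def
      have h1 : gammaBarIdx ω ≤ ENNReal.ofReal g' := hub g' (by simp only [hg'def]; linarith)
      have h2 : ENNReal.ofReal g' < gammaBarIdx ω := by
        calc ENNReal.ofReal g' < ENNReal.ofReal (gammaBarIdx ω).toReal :=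
              (ENNReal.ofReal_lt_ofReal_iff (by linarith)).mpr (by simp only [hg'def]; linarith)
        _ = gammaBarIdx ω := ENNReal.ofReal_toReal hXne
      exact absurd h1 (not_le.mpr h2)
    · apply le_sInf
      rintro b ⟨g, ⟨hg0, hgb⟩, rfl⟩
      exact ENNReal.ofReal_le_ofReal (hge g hg0 hgb)

lemma hyp_UB_LB {σ : ℝ → ℝ} (hw : Wk σ)
    (h1 : 0 < gammaIdx σ) (h2 : gammaIdx σ = gammaBarIdx σ) (h3 : gammaBarIdx σ < ⊤) :
    0 < (gammaIdx σ).toReal ∧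
    (∀ g, 0 < g → g < (gammaIdx σ).toReal → UBp σ g) ∧
    (∀ g, (gammaIdx σ).toReal < g → LBp σ g) := by
  have hne : gammaIdx σ ≠ ⊤ := by rw [h2]; exact h3.ne
  have ha0 : 0 < (gammaIdx σ).toReal := ENNReal.toReal_pos h1.ne' hne
  refine ⟨ha0, ?_, ?_⟩
  · intro g hg hga
    have hlt : ENNReal.ofReal g < gammaIdx σ := by
      calc ENNReal.ofReal g < ENNReal.ofReal (gammaIdx σ).toReal :=
            (ENNReal.ofReal_lt_ofReal_iff ha0).mpr hga
      _ = gammaIdx σ := ENNReal.ofReal_toReal hne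
    rw [gammaIdx] at hlt
    obtain ⟨g'', hlt2⟩ := lt_iSup_iff.mp hlt
    obtain ⟨hcond, hlt3⟩ := lt_iSup_iff.mp hlt2
    have hg'' : g < g'' := by
      by_contra hcon; push_neg at hcon
      exact absurd hlt3 (not_lt.mpr (ENNReal.ofReal_le_ofReal hcon))
    exact UBp_anti hg hg''.le (gammaProp_UBp hw hcond.1 hcond.2)
  · intro g hga
    have hg0 : 0 < g := lt_trans ha0 hga
    have hlt : gammaBarIdx σ < ENNReal.ofReal g := by
      rw [← h2]
      calc gammaIdx σ = ENNReal.ofReal (gammaIdx σ).toReal := (ENNReal.ofReal_toReal hne).symm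
      _ < ENNReal.ofReal g := (ENNReal.ofReal_lt_ofReal_iff hg0).mpr hga
    rw [gammaBarIdx] at hlt
    obtain ⟨b, hb, hblt⟩ := sInf_lt_iff.mp hlt
    obtain ⟨g'', ⟨hg''0, hbar⟩, rfl⟩ := hb
    have hg'' : g'' < g := by
      by_contra hcon; push_neg at hcon
      exact absurd hblt (not_lt.mpr (ENNReal.ofReal_le_ofReal hcon))
    exact LBp_mono hg''0 hg''.le (gammaBarProp_LBp hw hg''0 hbar)

/-- Strong weight-type hypotheses. -/
structure Wt (f : ℝ → ℝ) : Prop where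
  nn : ∀ t, 0 ≤ f t
  mono : MonotoneOn f (Ici (0:ℝ))
  tend : Tendsto f atTop atTop

lemma Wt.wk {f : ℝ → ℝ} (hf : Wt f) : Wk f :=
  ⟨hf.mono.mono (fun x hx => Set.mem_Ici.mpr (le_trans zero_le_one (Set.mem_Ici.mp hx))), hf.tend⟩

section LowerConj

variable {f h : ℝ → ℝ}

lemma lowerConj_set_nonempty (t : ℝ) :
    {z : ℝ | ∃ s : ℝ, 0 < s ∧ z = f s + h (t / s)}.Nonempty :=
  ⟨f 1 + h (t / 1), 1, one_pos, rfl⟩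

lemma lowerConj_set_bddBelow (hf : Wt f) (hh : Wt h) (t : ℝ) :
    BddBelow {z : ℝ | ∃ s : ℝ, 0 < s ∧ z = f s + h (t / s)} := by
  refine ⟨0, ?_⟩
  rintro z ⟨s, hs, rfl⟩
  exact add_nonneg (hf.nn s) (hh.nn (t/s))

lemma lowerConj_nonneg (hf : Wt f) (hh : Wt h) (t : ℝ) : 0 ≤ lowerConj f h t := by
  apply le_csInf (lowerConj_set_nonempty t)
  rintro z ⟨s, hs, rfl⟩
  exact add_nonneg (hf.nn s) (hh.nn (t/s))

lemma lowerConj_le (hf : Wt f) (hh : Wt h) {t s : ℝ} (hs : 0 < s) :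
    lowerConj f h t ≤ f s + h (t / s) :=
  csInf_le (lowerConj_set_bddBelow hf hh t) ⟨s, hs, rfl⟩

lemma le_lowerConj {t b : ℝ} (hb : ∀ s : ℝ, 0 < s → b ≤ f s + h (t / s)) :
    b ≤ lowerConj f h t :=
  le_csInf (lowerConj_set_nonempty t) (by rintro z ⟨s, hs, rfl⟩; exact hb s hs)

lemma lowerConj_exists_near (hf : Wt f) (hh : Wt h) (t : ℝ) {ε : ℝ} (hε : 0 < ε) :
    ∃ s : ℝ, 0 < s ∧ f s + h (t / s) < lowerConj f h t + ε := by
  have hlt : lowerConj f h t < lowerConj f h t + ε := by linarith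
  obtain ⟨z, ⟨s, hs, rfl⟩, hz⟩ := exists_lt_of_csInf_lt (lowerConj_set_nonempty t) hlt
  exact ⟨s, hs, hz⟩

lemma lowerConj_mono (hf : Wt f) (hh : Wt h) :
    MonotoneOn (lowerConj f h) (Ici (1:ℝ)) := by
  intro t₁ ht₁ t₂ ht₂ hle
  refine le_lowerConj (fun s hs => ?_)
  have ht₁0 : (0:ℝ) ≤ t₁ := le_trans zero_le_one ht₁
  have ht₂0 : (0:ℝ) ≤ t₂ := le_trans zero_le_one ht₂
  have h1 : t₁ / s ≤ t₂ / s := (div_le_div_iff_of_pos_right hs).mpr hle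
  have h2 : h (t₁ / s) ≤ h (t₂ / s) :=
    hh.mono (by exact div_nonneg ht₁0 hs.le) (by exact div_nonneg ht₂0 hs.le) h1
  calc lowerConj f h t₁ ≤ f s + h (t₁ / s) := lowerConj_le hf hh hs
  _ ≤ f s + h (t₂ / s) := by linarith

lemma lowerConj_tend (hf : Wt f) (hh : Wt h) :
    Tendsto (lowerConj f h) atTop atTop := by
  rw [tendsto_atTop]
  intro b
  obtain ⟨R₁, hR₁⟩ := eventually_atTop.mp (hf.tend.eventually_ge_atTop b)
  obtain ⟨R₂, hR₂⟩ := eventually_atTop.mp (hh.tend.eventually_ge_atTop b)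
  set R := max 1 (max R₁ R₂) with hR
  have hR1 : (1:ℝ) ≤ R := le_max_left _ _
  filter_upwards [eventually_ge_atTop (R^2)] with t ht
  have hRpos : (0:ℝ) < R := lt_of_lt_of_le one_pos hR1
  have htpos : 0 < t := lt_of_lt_of_le (by positivity) ht
  refine le_lowerConj (fun s hs => ?_)
  rcases le_or_gt R s with hcase | hcase
  · have : b ≤ f s := hR₁ s (le_trans (le_trans (le_max_left _ _) (le_max_right _ _)) hcase)
    linarith [hh.nn (t/s)]
  · have harg : R ≤ t / s := by
      rw [le_div_iff₀ hs]
      calc R * s ≤ R * R := by nlinarith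
      _ ≤ t := by nlinarith
    have : b ≤ h (t/s) := hR₂ _ (le_trans (le_trans (le_max_right _ _) (le_max_right _ _)) harg)
    linarith [hf.nn s]

end LowerConj

section ConjCore

variable {f h : ℝ → ℝ} {g₁ g₂ : ℝ}

lemma rpow_split_left {l : ℝ} (hl : 1 ≤ l) (hg₁ : 0 < g₁) (hg₂ : 0 < g₂) :
    (l ^ (g₁/(g₁+g₂))) ^ (1/g₁) = l ^ (1/(g₁+g₂)) := by
  have hl0 : (0:ℝ) ≤ l := le_trans zero_le_one hl
  rw [← Real.rpow_mul hl0]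
  congr 1
  have : g₁ + g₂ > 0 := by linarith
  field_simp

lemma rpow_split_right {l : ℝ} (hl : 1 ≤ l) (hg₁ : 0 < g₁) (hg₂ : 0 < g₂) :
    (l ^ (g₂/(g₁+g₂))) ^ (1/g₂) = l ^ (1/(g₁+g₂)) := by
  have hl0 : (0:ℝ) ≤ l := le_trans zero_le_one hl
  rw [← Real.rpow_mul hl0]
  congr 1
  have : g₁ + g₂ > 0 := by linarith
  field_simp

lemma rpow_split_mul {l : ℝ} (hl : 1 ≤ l) (hg₁ : 0 < g₁) (hg₂ : 0 < g₂) :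
    l ^ (g₁/(g₁+g₂)) * l ^ (g₂/(g₁+g₂)) = l := by
  have hl0 : (0:ℝ) < l := lt_of_lt_of_le one_pos hl
  rw [← Real.rpow_add hl0]
  have hg : g₁ + g₂ > 0 := by linarith
  rw [show g₁/(g₁+g₂) + g₂/(g₁+g₂) = 1 by field_simp, Real.rpow_one]

lemma UBp_lowerConj (hf : Wt f) (hh : Wt h) (hg₁ : 0 < g₁) (hg₂ : 0 < g₂)
    (h₁ : UBp f g₁) (h₂ : UBp h g₂) : UBp (lowerConj f h) (g₁ + g₂) := by
  obtain ⟨C₁, T₁, hC₁, hT₁, hU₁⟩ := h₁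
  obtain ⟨C₂, T₂, hC₂, hT₂, hU₂⟩ := h₂
  have hT₁0 : (0:ℝ) < T₁ := lt_of_lt_of_le one_pos hT₁
  have hT₂0 : (0:ℝ) < T₂ := lt_of_lt_of_le one_pos hT₂
  set u := lowerConj f h with hu
  set g := g₁ + g₂ with hg
  have hg0 : 0 < g := by simp only [hg]; linarith
  set D := max C₁ C₂ with hD
  have hD1 : (1:ℝ) ≤ D := le_trans hC₁ (le_max_left _ _)
  obtain ⟨T₃, hT₃⟩ := eventually_atTop.mp
    ((lowerConj_tend hf hh).eventually_ge_atTop (max (f T₁) (h T₂)))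
  set T := max T₃ (max 1 (T₁ * T₂)) with hT
  have hT1 : (1:ℝ) ≤ T := le_trans (le_max_left _ _) (le_max_right _ _)
  refine ⟨3 * D, T, by linarith, hT1, fun t ht => ⟨lowerConj_nonneg hf hh t, ?_⟩⟩
  intro l hl
  have ht1 : (1:ℝ) ≤ t := le_trans hT1 ht
  have ht0 : (0:ℝ) < t := lt_of_lt_of_le one_pos ht1
  have hl0 : (0:ℝ) < l := lt_of_lt_of_le one_pos hl
  have htT₁T₂ : T₁ * T₂ ≤ t := le_trans (le_trans (le_max_right _ _) (le_max_right _ _)) ht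
  have hut : max (f T₁) (h T₂) ≤ u t := hT₃ t (le_trans (le_max_left _ _) ht)
  have hfT₁ : f T₁ ≤ u t := le_trans (le_max_left _ _) hut
  have hhT₂ : h T₂ ≤ u t := le_trans (le_max_right _ _) hut
  have hunn : 0 ≤ u t := lowerConj_nonneg hf hh t
  -- the two scaled factors
  set a₁ := l ^ (g₁/g) with ha₁
  set a₂ := l ^ (g₂/g) with ha₂
  have ha₁1 : 1 ≤ a₁ := one_le_rpow' hl (by positivity)
  have ha₂1 : 1 ≤ a₂ := one_le_rpow' hl (by positivity)
  have ha₁0 : 0 < a₁ := lt_of_lt_of_le one_pos ha₁1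
  have ha₂0 : 0 < a₂ := lt_of_lt_of_le one_pos ha₂1
  have hsplit : a₁ * a₂ = l := rpow_split_mul hl hg₁ hg₂
  have hpow₁ : a₁ ^ (1/g₁) = l ^ (1/g) := rpow_split_left hl hg₁ hg₂
  have hpow₂ : a₂ ^ (1/g₂) = l ^ (1/g) := rpow_split_right hl hg₁ hg₂
  have hlg0 : 0 < l ^ (1/g) := Real.rpow_pos_of_pos hl0 _
  have key : ∀ ε : ℝ, 0 < ε → u (l * t) ≤ 3 * D * l ^ (1/g) * u t + D * l ^ (1/g) * ε := by
    intro ε hε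
    obtain ⟨s, hs0, hsnear⟩ := lowerConj_exists_near hf hh t hε
    set s' := min (max s T₁) (t / T₂) with hs'
    have htT₂ : T₁ ≤ t / T₂ := by rw [le_div_iff₀ hT₂0]; linarith
    have hs'T₁ : T₁ ≤ s' := le_min (le_max_right _ _) htT₂
    have hs'0 : 0 < s' := lt_of_lt_of_le hT₁0 hs'T₁
    have hs'le : s' ≤ t / T₂ := min_le_right _ _
    have hts' : T₂ ≤ t / s' := by
      rw [le_div_iff₀ hs'0]
      calc T₂ * s' ≤ T₂ * (t / T₂) := mul_le_mul_of_nonneg_left hs'le hT₂0.le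
      _ = t := by field_simp
    have hfs' : f s' ≤ f s + u t := by
      rcases le_total s T₁ with hc | hc
      · have : s' ≤ T₁ := le_trans (min_le_left _ _) (by rw [max_eq_right hc])
        have : s' = T₁ := le_antisymm this hs'T₁
        rw [this]
        linarith [hf.nn s]
      · have hmax : max s T₁ = s := max_eq_left hc
        have : s' ≤ s := le_trans (min_le_left _ _) (le_of_eq hmax)
        have := hf.mono (mem_Ici.mpr hs'0.le) (mem_Ici.mpr hs0.le) this
        linarith
    have hhs' : h (t / s') ≤ h (t / s) + u t := by
      rcases le_total (max s T₁) (t / T₂) with hc | hc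
      · have hseq : s' = max s T₁ := min_eq_left hc
        have hss' : s ≤ s' := by rw [hseq]; exact le_max_left _ _
        have harg : t / s' ≤ t / s := div_le_div_of_nonneg_left ht0.le hs0 hss'
        have := hh.mono (mem_Ici.mpr (by positivity)) (mem_Ici.mpr (by positivity)) harg
        linarith [hh.nn (t/s)]
      · have hseq : s' = t / T₂ := min_eq_right hc
        have : t / s' = T₂ := by rw [hseq]; field_simp
        rw [this]
        linarith [hh.nn (t/s)]
    have hstep : u (l * t) ≤ f (a₁ * s') + h (a₂ * (t / s')) := by
      have hpos : 0 < a₁ * s' := by positivity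
      have harg : (l * t) / (a₁ * s') = a₂ * (t / s') := by
        rw [← hsplit]; field_simp
      calc u (l * t) ≤ f (a₁ * s') + h ((l * t) / (a₁ * s')) := lowerConj_le hf hh hpos
      _ = f (a₁ * s') + h (a₂ * (t / s')) := by rw [harg]
    have hb₁ : f (a₁ * s') ≤ C₁ * l ^ (1/g) * f s' := by
      have := (hU₁ s' hs'T₁).2 a₁ ha₁1
      rwa [hpow₁] at this
    have hb₂ : h (a₂ * (t / s')) ≤ C₂ * l ^ (1/g) * h (t / s') := by
      have := (hU₂ (t / s') hts').2 a₂ ha₂1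
      rwa [hpow₂] at this
    have hfs'nn : 0 ≤ f s' := hf.nn s'
    have hhs'nn : 0 ≤ h (t/s') := hh.nn (t/s')
    have hC₁D : C₁ ≤ D := le_max_left _ _
    have hC₂D : C₂ ≤ D := le_max_right _ _
    have hD0 : (0:ℝ) < D := lt_of_lt_of_le one_pos hD1
    have hDl0 : (0:ℝ) ≤ D * l ^ (1/g) := (mul_pos hD0 hlg0).le
    calc u (l * t) ≤ C₁ * l ^ (1/g) * f s' + C₂ * l ^ (1/g) * h (t/s') := by
          linarith
    _ ≤ D * l ^ (1/g) * (f s' + h (t/s')) := by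
        have k₁ : C₁ * l ^ (1/g) * f s' ≤ D * l ^ (1/g) * f s' :=
          mul_le_mul_of_nonneg_right (mul_le_mul_of_nonneg_right hC₁D hlg0.le) hfs'nn
        have k₂ : C₂ * l ^ (1/g) * h (t/s') ≤ D * l ^ (1/g) * h (t/s') :=
          mul_le_mul_of_nonneg_right (mul_le_mul_of_nonneg_right hC₂D hlg0.le) hhs'nn
        linarith
    _ ≤ D * l ^ (1/g) * (f s + h (t/s) + 2 * u t) := by
        apply mul_le_mul_of_nonneg_left _ hDl0
        linarith
    _ ≤ D * l ^ (1/g) * (u t + ε + 2 * u t) := by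
        apply mul_le_mul_of_nonneg_left _ hDl0
        linarith
    _ = 3 * D * l ^ (1/g) * u t + D * l ^ (1/g) * ε := by ring
  -- remove ε
  have hfinal : u (l * t) ≤ 3 * D * l ^ (1/g) * u t := by
    apply le_of_forall_pos_le_add
    intro ε hε
    have hδ : 0 < ε / (D * l ^ (1/g)) := by positivity
    have := key _ hδ
    calc u (l * t) ≤ 3 * D * l ^ (1/g) * u t + D * l ^ (1/g) * (ε / (D * l ^ (1/g))) := this
    _ = 3 * D * l ^ (1/g) * u t + ε := by
        congr 1
        field_simp
  exact hfinal

lemma LBp_lowerConj (hf : Wt f) (hh : Wt h) (hg₁ : 0 < g₁) (hg₂ : 0 < g₂)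
    (h₁ : LBp f g₁) (h₂ : LBp h g₂) : LBp (lowerConj f h) (g₁ + g₂) := by
  obtain ⟨c₁, T₁, hc₁, hT₁, hL₁⟩ := h₁
  obtain ⟨c₂, T₂, hc₂, hT₂, hL₂⟩ := h₂
  have hT₁0 : (0:ℝ) < T₁ := lt_of_lt_of_le one_pos hT₁
  have hT₂0 : (0:ℝ) < T₂ := lt_of_lt_of_le one_pos hT₂
  set u := lowerConj f h with hu
  set g := g₁ + g₂ with hg
  have hg0 : 0 < g := by simp only [hg]; linarith
  have htend₁ : Tendsto (fun t : ℝ => h (t / T₁)) atTop atTop :=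
    hh.tend.comp (tendsto_id.atTop_div_const hT₁0)
  have htend₂ : Tendsto (fun t : ℝ => f (t / T₂)) atTop atTop :=
    hf.tend.comp (tendsto_id.atTop_div_const hT₂0)
  obtain ⟨T₃, hT₃⟩ := eventually_atTop.mp
    ((htend₁.eventually_ge_atTop (f T₁)).and (htend₂.eventually_ge_atTop (h T₂)))
  set T := max T₃ (max 1 (T₁ * T₂)) with hT
  have hT1 : (1:ℝ) ≤ T := le_trans (le_max_left _ _) (le_max_right _ _)
  set c := min (c₁/2) (c₂/2) with hc
  have hc0 : 0 < c := by
    apply lt_min <;> linarith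
  refine ⟨c, T, hc0, hT1, fun t ht => ⟨lowerConj_nonneg hf hh t, ?_⟩⟩
  intro l hl
  have ht1 : (1:ℝ) ≤ t := le_trans hT1 ht
  have ht0 : (0:ℝ) < t := lt_of_lt_of_le one_pos ht1
  have hl0 : (0:ℝ) < l := lt_of_lt_of_le one_pos hl
  have htT₁T₂ : T₁ * T₂ ≤ t := le_trans (le_trans (le_max_right _ _) (le_max_right _ _)) ht
  obtain ⟨hbig₁, hbig₂⟩ := hT₃ t (le_trans (le_max_left _ _) ht)
  have hunn : 0 ≤ u t := lowerConj_nonneg hf hh t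
  set a₁ := l ^ (g₁/g) with ha₁
  set a₂ := l ^ (g₂/g) with ha₂
  have ha₁1 : 1 ≤ a₁ := one_le_rpow' hl (by positivity)
  have ha₂1 : 1 ≤ a₂ := one_le_rpow' hl (by positivity)
  have ha₁0 : 0 < a₁ := lt_of_lt_of_le one_pos ha₁1
  have ha₂0 : 0 < a₂ := lt_of_lt_of_le one_pos ha₂1
  have hsplit : a₁ * a₂ = l := rpow_split_mul hl hg₁ hg₂
  have hpow₁ : a₁ ^ (1/g₁) = l ^ (1/g) := rpow_split_left hl hg₁ hg₂
  have hpow₂ : a₂ ^ (1/g₂) = l ^ (1/g) := rpow_split_right hl hg₁ hg₂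
  have hlg0 : 0 < l ^ (1/g) := Real.rpow_pos_of_pos hl0 _
  have htT₂ : T₁ ≤ t / T₂ := by rw [le_div_iff₀ hT₂0]; linarith
  have htT₁ : T₂ ≤ t / T₁ := by rw [le_div_iff₀ hT₁0]; nlinarith
  -- u t ≤ 2 h(t/T₁) and u t ≤ 2 f(t/T₂)
  have huh : u t ≤ 2 * h (t / T₁) := by
    have := lowerConj_le hf hh (t := t) hT₁0
    linarith
  have huf : u t ≤ 2 * f (t / T₂) := by
    have h1 := lowerConj_le hf hh (t := t) (lt_of_lt_of_le hT₁0 htT₂)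
    have h2 : t / (t / T₂) = T₂ := by field_simp
    rw [h2] at h1
    linarith
  refine le_lowerConj ?_
  rintro s hs0
  rcases lt_or_ge s (a₁ * T₁) with hcase | hcase
  · -- Case B : s small
    have harg : a₂ * (t / T₁) ≤ (l * t) / s := by
      rw [le_div_iff₀ hs0]
      have e1 : a₂ * (t / T₁) * (a₁ * T₁) = l * t := by
        field_simp [← hsplit]; linarith [hsplit, mul_comm a₁ a₂]
      calc a₂ * (t / T₁) * s ≤ a₂ * (t / T₁) * (a₁ * T₁) := by
            apply mul_le_mul_of_nonneg_left hcase.le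
            positivity
      _ = l * t := e1
    have hb : c₂ * l ^ (1/g) * h (t / T₁) ≤ h (a₂ * (t / T₁)) := by
      have := (hL₂ (t / T₁) htT₁).2 a₂ ha₂1
      rwa [hpow₂] at this
    have hmono : h (a₂ * (t / T₁)) ≤ h ((l * t) / s) :=
      hh.mono (mem_Ici.mpr (by positivity)) (mem_Ici.mpr (by positivity)) harg
    have hfnn : 0 ≤ f s := hf.nn s
    have hcle : c ≤ c₂/2 := min_le_right _ _
    have k₁ : c * l ^ (1/g) * u t ≤ (c₂/2) * l ^ (1/g) * u t :=
      mul_le_mul_of_nonneg_right (mul_le_mul_of_nonneg_right hcle hlg0.le) hunn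
    have k₂ : (c₂/2) * l ^ (1/g) * u t ≤ (c₂/2) * l ^ (1/g) * (2 * h (t/T₁)) :=
      mul_le_mul_of_nonneg_left huh (by positivity)
    have k₃ : (c₂/2) * l ^ (1/g) * (2 * h (t/T₁)) = c₂ * l ^ (1/g) * h (t/T₁) := by ring
    linarith
  · rcases le_or_gt s (a₁ * (t / T₂)) with hcase₂ | hcase₂
    · -- Case A : middle range
      set s'' := s / a₁ with hs''
      have hs''0 : 0 < s'' := by positivity
      have hs''T₁ : T₁ ≤ s'' := by
        rw [hs'', le_div_iff₀ ha₁0]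
        calc T₁ * a₁ = a₁ * T₁ := by ring
        _ ≤ s := hcase
      have hs''le : s'' ≤ t / T₂ := by
        rw [hs'', div_le_iff₀ ha₁0]
        calc s ≤ a₁ * (t / T₂) := hcase₂
        _ = t / T₂ * a₁ := by ring
      have hts'' : T₂ ≤ t / s'' := by
        rw [le_div_iff₀ hs''0]
        calc T₂ * s'' ≤ T₂ * (t / T₂) := mul_le_mul_of_nonneg_left hs''le hT₂0.le
        _ = t := by field_simp
      have hb₁ : c₁ * l ^ (1/g) * f s'' ≤ f s := by
        have := (hL₁ s'' hs''T₁).2 a₁ ha₁1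
        rw [hpow₁] at this
        have e : a₁ * s'' = s := by rw [hs'']; field_simp
        rwa [e] at this
      have hb₂ : c₂ * l ^ (1/g) * h (t / s'') ≤ h ((l * t) / s) := by
        have := (hL₂ (t / s'') hts'').2 a₂ ha₂1
        rw [hpow₂] at this
        have e : a₂ * (t / s'') = (l * t) / s := by
          rw [hs'']; field_simp [← hsplit]; linarith [hsplit, mul_comm a₁ a₂]
        rwa [e] at this
      have hule : u t ≤ f s'' + h (t / s'') := lowerConj_le hf hh hs''0
      have hcle₁ : c ≤ c₁/2 := min_le_left _ _
      have hcle₂ : c ≤ c₂/2 := min_le_right _ _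
      have hfnn : 0 ≤ f s'' := hf.nn s''
      have hhnn : 0 ≤ h (t/s'') := hh.nn (t/s'')
      have hcc₁ : c ≤ c₁ := le_trans hcle₁ (by linarith)
      have hcc₂ : c ≤ c₂ := le_trans hcle₂ (by linarith)
      have k₀ : c * l ^ (1/g) * u t ≤ c * l ^ (1/g) * (f s'' + h (t/s'')) :=
        mul_le_mul_of_nonneg_left hule (by positivity)
      have k₁ : c * l ^ (1/g) * f s'' ≤ c₁ * l ^ (1/g) * f s'' :=
        mul_le_mul_of_nonneg_right (mul_le_mul_of_nonneg_right hcc₁ hlg0.le) hfnn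
      have k₂ : c * l ^ (1/g) * h (t/s'') ≤ c₂ * l ^ (1/g) * h (t/s'') :=
        mul_le_mul_of_nonneg_right (mul_le_mul_of_nonneg_right hcc₂ hlg0.le) hhnn
      have k₃ : c * l ^ (1/g) * (f s'' + h (t/s'')) =
          c * l ^ (1/g) * f s'' + c * l ^ (1/g) * h (t/s'') := by ring
      linarith
    · -- Case C : s large
      have harg : a₁ * (t / T₂) ≤ s := hcase₂.le
      have hb : c₁ * l ^ (1/g) * f (t / T₂) ≤ f (a₁ * (t / T₂)) := by
        have := (hL₁ (t / T₂) htT₂).2 a₁ ha₁1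
        rwa [hpow₁] at this
      have hmono : f (a₁ * (t / T₂)) ≤ f s :=
        hf.mono (mem_Ici.mpr (by positivity)) (mem_Ici.mpr hs0.le) harg
      have hcle : c ≤ c₁/2 := min_le_left _ _
      have k₁ : c * l ^ (1/g) * u t ≤ (c₁/2) * l ^ (1/g) * u t :=
        mul_le_mul_of_nonneg_right (mul_le_mul_of_nonneg_right hcle hlg0.le) hunn
      have k₂ : (c₁/2) * l ^ (1/g) * u t ≤ (c₁/2) * l ^ (1/g) * (2 * f (t/T₂)) :=
        mul_le_mul_of_nonneg_left huf (by positivity)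
      have k₃ : (c₁/2) * l ^ (1/g) * (2 * f (t/T₂)) = c₁ * l ^ (1/g) * f (t/T₂) := by ring
      linarith [hh.nn ((l*t)/s)]

end ConjCore
section PhiStar

variable {σ : ℝ → ℝ} {ℓ : ℝ}

lemma phiStar_set_nonempty (σ : ℝ → ℝ) (x : ℝ) :
    {z : ℝ | ∃ y : ℝ, 0 ≤ y ∧ z = x * y - σ (Real.exp y)}.Nonempty :=
  ⟨x * 0 - σ (Real.exp 0), 0, le_rfl, rfl⟩

lemma phiStar_bddAbove (hσ : IsW0 σ) {x : ℝ} (hx : 0 ≤ x) :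
    BddAbove {z : ℝ | ∃ y : ℝ, 0 ≤ y ∧ z = x * y - σ (Real.exp y)} := by
  have hσnn : ∀ t, 0 ≤ σ t := hσ.1.1
  have hlo := (Asymptotics.isLittleO_iff.mp hσ.2.2.2.1)
    (show (0:ℝ) < 1/(x+1) by positivity)
  obtain ⟨T, hT⟩ := eventually_atTop.mp hlo
  set Y := max (Real.log T) 0 with hY
  refine ⟨max 0 (x * Y), ?_⟩
  rintro z ⟨y, hy, rfl⟩
  rcases le_or_gt T (Real.exp y) with hcase | hcase
  · have h1 := hT _ hcase
    rw [Real.norm_eq_abs, Real.norm_eq_abs, Real.log_exp,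
      abs_of_nonneg hy, abs_of_nonneg (hσnn _)] at h1
    have h2 : (x+1) * y ≤ σ (Real.exp y) := by
      rw [div_mul_eq_mul_div, le_div_iff₀ (by positivity : (0:ℝ) < x+1)] at h1
      linarith [h1]
    have : x * y - σ (Real.exp y) ≤ -y := by linarith
    calc x * y - σ (Real.exp y) ≤ -y := this
    _ ≤ 0 := by linarith
    _ ≤ max 0 (x * Y) := le_max_left _ _
  · have hT0 : 0 < T := lt_trans (Real.exp_pos y) hcase
    have h1 : y < Real.log T := by
      calc y = Real.log (Real.exp y) := (Real.log_exp y).symm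
      _ < Real.log T := Real.log_lt_log (Real.exp_pos y) hcase
    have h2 : y ≤ Y := le_trans h1.le (le_max_left _ _)
    calc x * y - σ (Real.exp y) ≤ x * y := by linarith [hσnn (Real.exp y)]
    _ ≤ x * Y := mul_le_mul_of_nonneg_left h2 hx
    _ ≤ max 0 (x * Y) := le_max_right _ _

lemma phiStar_ge (hσ : IsW0 σ) {x : ℝ} (hx : 0 ≤ x) {y : ℝ} (hy : 0 ≤ y) :
    x * y - σ (Real.exp y) ≤ phiStar σ x :=
  le_csSup (phiStar_bddAbove hσ hx) ⟨y, hy, rfl⟩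

lemma phiStar_le {b : ℝ} (hb : ∀ y : ℝ, 0 ≤ y → x * y - σ (Real.exp y) ≤ b) :
    phiStar σ x ≤ b := by
  apply csSup_le (phiStar_set_nonempty σ x)
  rintro z ⟨y, hy, rfl⟩
  exact hb y hy

lemma phiStar_nonneg (hσ : IsW0 σ) {x : ℝ} (hx : 0 ≤ x) : 0 ≤ phiStar σ x := by
  have h1 := phiStar_ge hσ hx (le_refl (0:ℝ))
  have h2 : σ (Real.exp 0) = 0 := by
    rw [Real.exp_zero]
    exact hσ.2.2.1 1 ⟨zero_le_one, le_rfl⟩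
  rw [h2] at h1
  linarith

lemma phiStar_mono (hσ : IsW0 σ) {x₁ x₂ : ℝ} (hx₁ : 0 ≤ x₁) (hle : x₁ ≤ x₂) :
    phiStar σ x₁ ≤ phiStar σ x₂ := by
  apply phiStar_le
  intro y hy
  calc x₁ * y - σ (Real.exp y) ≤ x₂ * y - σ (Real.exp y) := by
        have := mul_le_mul_of_nonneg_right hle hy
        linarith
  _ ≤ phiStar σ x₂ := phiStar_ge hσ (le_trans hx₁ hle) hy

lemma phiStar_zero (hσ : IsW0 σ) : phiStar σ 0 = 0 := by
  apply le_antisymm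
  · apply phiStar_le
    intro y hy
    have := hσ.1.1 (Real.exp y)
    linarith
  · exact phiStar_nonneg hσ le_rfl

lemma assocSeq_pos (σ : ℝ → ℝ) (ℓ : ℝ) (p : ℕ) : 0 < assocSeq σ ℓ p := Real.exp_pos _

lemma assocSeq_zero (hσ : IsW0 σ) (ℓ : ℝ) : assocSeq σ ℓ 0 = 1 := by
  rw [assocSeq]
  norm_num
  rw [phiStar_zero hσ]
  simp

lemma log_assocSeq (σ : ℝ → ℝ) (ℓ : ℝ) (p : ℕ) :
    Real.log (assocSeq σ ℓ p) = (1/ℓ) * phiStar σ (ℓ * p) := Real.log_exp _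

lemma omegaSeq_elt_eq (σ : ℝ → ℝ) (ℓ : ℝ) {t : ℝ} (ht : 0 < t) (p : ℕ) :
    Real.log (t ^ p / assocSeq σ ℓ p) =
      (p : ℝ) * Real.log t - (1/ℓ) * phiStar σ (ℓ * p) := by
  rw [Real.log_div (pow_ne_zero p (ne_of_gt ht)) (ne_of_gt (assocSeq_pos σ ℓ p)),
    Real.log_pow, log_assocSeq]

lemma omegaSeq_elt_bound (hσ : IsW0 σ) (hℓ : 0 < ℓ) {t : ℝ} (ht : 1 ≤ t) (p : ℕ) :
    (p : ℝ) * Real.log t - (1/ℓ) * phiStar σ (ℓ * p) ≤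
      (1/ℓ) * σ (Real.exp (Real.log t + 1)) := by
  have hy : (0:ℝ) ≤ Real.log t + 1 := by
    have := Real.log_nonneg ht; linarith
  have h1 := phiStar_ge hσ (by positivity : (0:ℝ) ≤ ℓ * p) hy
  have h2 : (1/ℓ) * (ℓ * p * (Real.log t + 1) - σ (Real.exp (Real.log t + 1)))
      ≤ (1/ℓ) * phiStar σ (ℓ * p) := mul_le_mul_of_nonneg_left h1 (by positivity)
  have h3 : (1/ℓ) * (ℓ * p * (Real.log t + 1) - σ (Real.exp (Real.log t + 1)))
      = (p : ℝ) * (Real.log t + 1) - (1/ℓ) * σ (Real.exp (Real.log t + 1)) := by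
    field_simp
  rw [h3] at h2
  have hp : (0:ℝ) ≤ (p:ℝ) := Nat.cast_nonneg p
  linarith

lemma omegaSeq_bddAbove (hσ : IsW0 σ) (hℓ : 0 < ℓ) (t : ℝ) :
    BddAbove {z : ℝ | ∃ p : ℕ, z = Real.log (t ^ p / assocSeq σ ℓ p)} := by
  set u := max |t| 1 with hu
  have hu1 : (1:ℝ) ≤ u := le_max_right _ _
  have hu0 : (0:ℝ) < u := lt_of_lt_of_le one_pos hu1
  refine ⟨max 0 ((1/ℓ) * σ (Real.exp (Real.log u + 1))), ?_⟩
  rintro z ⟨p, rfl⟩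
  have habs : Real.log (t ^ p / assocSeq σ ℓ p) = Real.log (|t| ^ p / assocSeq σ ℓ p) := by
    rw [← Real.log_abs, abs_div, abs_pow, abs_of_pos (assocSeq_pos σ ℓ p)]
  rw [habs]
  rcases eq_or_lt_of_le (pow_nonneg (abs_nonneg t) p) with h0 | h0
  · rw [← h0]
    simp only [zero_div, Real.log_zero]
    exact le_max_left _ _
  · have htp : 0 < |t| ^ p / assocSeq σ ℓ p := div_pos h0 (assocSeq_pos σ ℓ p)
    have hle : |t| ^ p / assocSeq σ ℓ p ≤ u ^ p / assocSeq σ ℓ p := by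
      apply (div_le_div_iff_of_pos_right (assocSeq_pos σ ℓ p)).mpr
      exact pow_le_pow_left₀ (abs_nonneg t) (le_max_left _ _) p
    calc Real.log (|t| ^ p / assocSeq σ ℓ p) ≤ Real.log (u ^ p / assocSeq σ ℓ p) :=
          Real.log_le_log htp hle
    _ = (p : ℝ) * Real.log u - (1/ℓ) * phiStar σ (ℓ * p) := omegaSeq_elt_eq σ ℓ hu0 p
    _ ≤ (1/ℓ) * σ (Real.exp (Real.log u + 1)) := omegaSeq_elt_bound hσ hℓ hu1 p
    _ ≤ max 0 ((1/ℓ) * σ (Real.exp (Real.log u + 1))) := le_max_right _ _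

lemma omegaSeq_ge (hσ : IsW0 σ) (hℓ : 0 < ℓ) (t : ℝ) (p : ℕ) :
    Real.log (t ^ p / assocSeq σ ℓ p) ≤ omegaSeq (assocSeq σ ℓ) t :=
  le_csSup (omegaSeq_bddAbove hσ hℓ t) ⟨p, rfl⟩

lemma omegaSeq_le {t b : ℝ}
    (hb : ∀ p : ℕ, Real.log (t ^ p / assocSeq σ ℓ p) ≤ b) :
    omegaSeq (assocSeq σ ℓ) t ≤ b := by
  have hne : {z : ℝ | ∃ p : ℕ, z = Real.log (t ^ p / assocSeq σ ℓ p)}.Nonempty :=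
    ⟨Real.log (t ^ 0 / assocSeq σ ℓ 0), 0, rfl⟩
  apply csSup_le hne
  rintro z ⟨p, rfl⟩
  exact hb p

lemma omegaSeq_nonneg (hσ : IsW0 σ) (hℓ : 0 < ℓ) (t : ℝ) :
    0 ≤ omegaSeq (assocSeq σ ℓ) t := by
  have := omegaSeq_ge hσ hℓ t 0
  rw [pow_zero, assocSeq_zero hσ, div_one, Real.log_one] at this
  exact this

lemma omegaSeq_mono (hσ : IsW0 σ) (hℓ : 0 < ℓ) :
    MonotoneOn (omegaSeq (assocSeq σ ℓ)) (Ici (0:ℝ)) := by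
  intro t₁ ht₁ t₂ ht₂ hle
  apply omegaSeq_le
  intro p
  rcases eq_or_lt_of_le (mem_Ici.mp ht₁) with h0 | h0
  · rcases Nat.eq_zero_or_pos p with hp | hp
    · subst hp
      rw [pow_zero, assocSeq_zero hσ, div_one, Real.log_one]
      exact omegaSeq_nonneg hσ hℓ t₂
    · rw [← h0, zero_pow (by omega : p ≠ 0), zero_div, Real.log_zero]
      exact omegaSeq_nonneg hσ hℓ t₂
  · have htp : 0 < t₁ ^ p / assocSeq σ ℓ p := div_pos (pow_pos h0 p) (assocSeq_pos σ ℓ p)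
    calc Real.log (t₁ ^ p / assocSeq σ ℓ p) ≤ Real.log (t₂ ^ p / assocSeq σ ℓ p) := by
          apply Real.log_le_log htp
          apply (div_le_div_iff_of_pos_right (assocSeq_pos σ ℓ p)).mpr
          exact pow_le_pow_left₀ h0.le hle p
    _ ≤ omegaSeq (assocSeq σ ℓ) t₂ := omegaSeq_ge hσ hℓ t₂ p

lemma omegaSeq_tend (hσ : IsW0 σ) (hℓ : 0 < ℓ) :
    Tendsto (omegaSeq (assocSeq σ ℓ)) atTop atTop := by
  apply tendsto_atTop_mono' atTop
    (show ∀ᶠ t : ℝ in atTop,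
      Real.log t + (- Real.log (assocSeq σ ℓ 1)) ≤ omegaSeq (assocSeq σ ℓ) t from ?_)
  · exact tendsto_atTop_add_const_right atTop _ Real.tendsto_log_atTop
  · filter_upwards [eventually_ge_atTop (1:ℝ)] with t ht
    have ht0 : (0:ℝ) < t := lt_of_lt_of_le one_pos ht
    have := omegaSeq_ge hσ hℓ t 1
    rw [Real.log_div (pow_ne_zero 1 (ne_of_gt ht0)) (ne_of_gt (assocSeq_pos σ ℓ 1)),
      pow_one] at this
    linarith

lemma omegaSeq_Wt (hσ : IsW0 σ) (hℓ : 0 < ℓ) : Wt (omegaSeq (assocSeq σ ℓ)) :=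
  ⟨omegaSeq_nonneg hσ hℓ, omegaSeq_mono hσ hℓ, omegaSeq_tend hσ hℓ⟩

lemma omegaSeq_le_sigma (hσ : IsW0 σ) (hℓ : 0 < ℓ) {t : ℝ} (ht : 1 ≤ t) :
    ℓ * omegaSeq (assocSeq σ ℓ) t ≤ σ t := by
  have ht0 : (0:ℝ) < t := lt_of_lt_of_le one_pos ht
  have hy : (0:ℝ) ≤ Real.log t := Real.log_nonneg ht
  have key : omegaSeq (assocSeq σ ℓ) t ≤ (1/ℓ) * σ t := by
    apply omegaSeq_le
    intro p
    rw [omegaSeq_elt_eq σ ℓ ht0 p]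
    have h1 := phiStar_ge hσ (by positivity : (0:ℝ) ≤ ℓ * p) hy
    rw [Real.exp_log ht0] at h1
    have h2 : (1/ℓ) * (ℓ * p * Real.log t - σ t) ≤ (1/ℓ) * phiStar σ (ℓ * p) :=
      mul_le_mul_of_nonneg_left h1 (by positivity)
    have h3 : (1/ℓ) * (ℓ * p * Real.log t - σ t) = (p:ℝ) * Real.log t - (1/ℓ) * σ t := by
      field_simp
    rw [h3] at h2
    linarith
  calc ℓ * omegaSeq (assocSeq σ ℓ) t ≤ ℓ * ((1/ℓ) * σ t) :=
        mul_le_mul_of_nonneg_left key hℓ.le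
  _ = σ t := by field_simp

lemma sigma_le_omegaSeq (hσ : IsW0 σ) (hℓ : 0 < ℓ) {t : ℝ} (ht : 1 ≤ t) :
    σ t ≤ ℓ * omegaSeq (assocSeq σ ℓ) t + ℓ * Real.log t := by
  have ht0 : (0:ℝ) < t := lt_of_lt_of_le one_pos ht
  set y := Real.log t with hydef
  have hy : (0:ℝ) ≤ y := Real.log_nonneg ht
  have hσmono : MonotoneOn σ (Ici (0:ℝ)) := hσ.1.2.1
  have hconv := hσ.2.2.2.2
  set Sl := {z : ℝ | ∃ d : ℝ, 0 < d ∧ z = (σ (Real.exp (y + d)) - σ (Real.exp y)) / d}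
    with hSl
  have hSlne : Sl.Nonempty := ⟨_, 1, one_pos, rfl⟩
  have hSlbb : BddBelow Sl := by
    refine ⟨0, ?_⟩
    rintro z ⟨d, hd, rfl⟩
    apply div_nonneg _ hd.le
    have := hσmono (mem_Ici.mpr (Real.exp_pos y).le)
      (mem_Ici.mpr (Real.exp_pos (y + d)).le)
      (Real.exp_le_exp.mpr (by linarith))
    linarith
  set m := sInf Sl with hm
  have hm0 : 0 ≤ m := by
    apply le_csInf hSlne
    rintro z ⟨d, hd, rfl⟩
    apply div_nonneg _ hd.le
    have := hσmono (mem_Ici.mpr (Real.exp_pos y).le)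
      (mem_Ici.mpr (Real.exp_pos (y + d)).le)
      (Real.exp_le_exp.mpr (by linarith))
    linarith
  have hr : ∀ d : ℝ, 0 < d → σ (Real.exp y) + m * d ≤ σ (Real.exp (y + d)) := by
    intro d hd
    have h1 : m ≤ (σ (Real.exp (y + d)) - σ (Real.exp y)) / d :=
      csInf_le hSlbb ⟨d, hd, rfl⟩
    rw [le_div_iff₀ hd] at h1
    linarith
  have hl : ∀ y' : ℝ, y' < y → σ (Real.exp y) + m * (y' - y) ≤ σ (Real.exp y') := by
    intro y' hy'
    have h1 : (σ (Real.exp y) - σ (Real.exp y')) / (y - y') ≤ m := by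
      apply le_csInf hSlne
      rintro z ⟨d, hd, rfl⟩
      have h3 := hconv.slope_mono_adjacent (mem_univ y') (mem_univ (y + d)) hy'
        (by linarith : y < y + d)
      rw [show y + d - y = d by ring] at h3
      exact h3
    rw [div_le_iff₀ (by linarith : (0:ℝ) < y - y')] at h1
    nlinarith
  have hkey : ∀ y' : ℝ, 0 ≤ y' → m * y' - σ (Real.exp y') ≤ m * y - σ (Real.exp y) := by
    intro y' hy'
    rcases lt_trichotomy y' y with hc | hc | hc
    · have h1 := hl y' hc
      have h2 : m * (y' - y) = m * y' - m * y := by ring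
      rw [h2] at h1
      linarith
    · rw [hc]
    · have h1 := hr (y' - y) (by linarith)
      rw [show y + (y' - y) = y' by ring] at h1
      have h2 : m * (y' - y) = m * y' - m * y := by ring
      rw [h2] at h1
      linarith
  have hφs : phiStar σ m ≤ m * y - σ (Real.exp y) := phiStar_le hkey
  set p := ⌊m / ℓ⌋₊ with hp
  have hp1 : ℓ * p ≤ m := by
    have h1 : (p : ℝ) ≤ m / ℓ := Nat.floor_le (by positivity)
    calc ℓ * p ≤ ℓ * (m / ℓ) := mul_le_mul_of_nonneg_left h1 hℓ.le
    _ = m := by field_simp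
  have hp2 : m ≤ ℓ * p + ℓ := by
    have h1 : m / ℓ < (p : ℝ) + 1 := Nat.lt_floor_add_one _
    have := mul_lt_mul_of_pos_left h1 hℓ
    rw [mul_div_cancel₀ _ (ne_of_gt hℓ)] at this
    nlinarith
  have hφmono : phiStar σ (ℓ * p) ≤ phiStar σ m := phiStar_mono hσ (by positivity) hp1
  have helt : (p : ℝ) * y - (1/ℓ) * phiStar σ (ℓ * p) ≤ omegaSeq (assocSeq σ ℓ) t := by
    have := omegaSeq_ge hσ hℓ t p
    rwa [omegaSeq_elt_eq σ ℓ ht0 p] at this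
  have hexp : Real.exp y = t := Real.exp_log ht0
  rw [hexp] at hφs
  have hmain : σ t - ℓ * y ≤ ℓ * omegaSeq (assocSeq σ ℓ) t := by
    have h4 : ℓ * ((p : ℝ) * y - (1/ℓ) * phiStar σ (ℓ * p)) ≤
        ℓ * omegaSeq (assocSeq σ ℓ) t := mul_le_mul_of_nonneg_left helt hℓ.le
    have h5 : ℓ * ((p : ℝ) * y - (1/ℓ) * phiStar σ (ℓ * p)) =
        ℓ * p * y - phiStar σ (ℓ * p) := by field_simp
    rw [h5] at h4
    have h6 : phiStar σ (ℓ * p) ≤ m * y - σ t := le_trans hφmono hφs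
    have h7 : (m - ℓ * p) * y ≤ ℓ * y := mul_le_mul_of_nonneg_right (by linarith) hy
    nlinarith
  linarith

lemma omegaSeq_squeeze (hσ : IsW0 σ) (hℓ : 0 < ℓ) :
    ∃ T : ℝ, 1 ≤ T ∧ ∀ t, T ≤ t →
      (1/(2*ℓ)) * σ t ≤ omegaSeq (assocSeq σ ℓ) t ∧
      omegaSeq (assocSeq σ ℓ) t ≤ (1/ℓ) * σ t := by
  have hσnn : ∀ t, 0 ≤ σ t := hσ.1.1
  have hlo := (Asymptotics.isLittleO_iff.mp hσ.2.2.2.1)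
    (show (0:ℝ) < 1/(2*ℓ) by positivity)
  obtain ⟨T₀, hT₀⟩ := eventually_atTop.mp hlo
  refine ⟨max T₀ 1, le_max_right _ _, fun t ht => ?_⟩
  have ht1 : (1:ℝ) ≤ t := le_trans (le_max_right _ _) ht
  have ht0 : (0:ℝ) < t := lt_of_lt_of_le one_pos ht1
  have hlog := hT₀ t (le_trans (le_max_left _ _) ht)
  rw [Real.norm_eq_abs, Real.norm_eq_abs, abs_of_nonneg (Real.log_nonneg ht1),
    abs_of_nonneg (hσnn t)] at hlog
  constructor
  · have h1 := sigma_le_omegaSeq hσ hℓ ht1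
    have h2 : ℓ * Real.log t ≤ (1/2) * σ t := by
      have h2a := mul_le_mul_of_nonneg_left hlog hℓ.le
      have h2b : ℓ * (1/(2*ℓ) * σ t) = (1/2) * σ t := by
        rw [← mul_assoc]
        congr 1
        field_simp
      rw [h2b] at h2a
      exact h2a
    have h5 : σ t ≤ (2*ℓ) * omegaSeq (assocSeq σ ℓ) t := by linarith
    have h6 := mul_le_mul_of_nonneg_left h5 (by positivity : (0:ℝ) ≤ 1/(2*ℓ))
    have h7 : (1/(2*ℓ)) * ((2*ℓ) * omegaSeq (assocSeq σ ℓ) t) =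
        omegaSeq (assocSeq σ ℓ) t := by
      rw [← mul_assoc, one_div_mul_cancel (by positivity : (2*ℓ) ≠ 0), one_mul]
    rw [h7] at h6
    exact h6
  · have h1 := omegaSeq_le_sigma hσ hℓ ht1
    have h2 := mul_le_mul_of_nonneg_left h1 (by positivity : (0:ℝ) ≤ 1/ℓ)
    have h3 : (1/ℓ) * (ℓ * omegaSeq (assocSeq σ ℓ) t) = omegaSeq (assocSeq σ ℓ) t := by
      rw [← mul_assoc, one_div_mul_cancel (ne_of_gt hℓ), one_mul]
    rw [h3] at h2
    exact h2

end PhiStar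


section Transfer

lemma UBp_squeeze {ω' σ : ℝ → ℝ} {c₁ c₂ T₀ g : ℝ} (hc₁ : 0 < c₁) (hc₂ : 0 < c₂)
    (hT₀ : 1 ≤ T₀) (hsq : ∀ t, T₀ ≤ t → c₁ * σ t ≤ ω' t ∧ ω' t ≤ c₂ * σ t)
    (h : UBp σ g) : UBp ω' g := by
  obtain ⟨C, T, hC, hT, hU⟩ := h
  refine ⟨max 1 (C * c₂ / c₁), max T T₀, le_max_left _ _,
    le_trans hT (le_max_left _ _), ?_⟩
  intro t ht
  have htT : T ≤ t := le_trans (le_max_left _ _) ht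
  have htT₀ : T₀ ≤ t := le_trans (le_max_right _ _) ht
  have hσt : 0 ≤ σ t := (hU t htT).1
  have hω't : 0 ≤ ω' t := le_trans (by positivity) (hsq t htT₀).1
  refine ⟨hω't, fun l hl => ?_⟩
  have hl0 : (0:ℝ) < l := lt_of_lt_of_le one_pos hl
  have ht0 : (0:ℝ) < t := lt_of_lt_of_le one_pos (le_trans hT htT)
  have hlt : T₀ ≤ l * t := le_trans htT₀ (by nlinarith)
  have hlg0 : 0 < l ^ (1/g) := Real.rpow_pos_of_pos hl0 _
  have k1 : ω' (l * t) ≤ c₂ * σ (l * t) := (hsq _ hlt).2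
  have k2 : σ (l * t) ≤ C * l ^ (1/g) * σ t := (hU t htT).2 l hl
  have k3 : σ t ≤ ω' t / c₁ := by
    rw [le_div_iff₀ hc₁]
    have := (hsq t htT₀).1
    linarith
  calc ω' (l * t) ≤ c₂ * σ (l * t) := k1
  _ ≤ c₂ * (C * l ^ (1/g) * σ t) := mul_le_mul_of_nonneg_left k2 hc₂.le
  _ ≤ c₂ * (C * l ^ (1/g) * (ω' t / c₁)) := by
      apply mul_le_mul_of_nonneg_left _ hc₂.le
      exact mul_le_mul_of_nonneg_left k3 (by positivity)
  _ = (C * c₂ / c₁) * l ^ (1/g) * ω' t := by field_simp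
  _ ≤ max 1 (C * c₂ / c₁) * l ^ (1/g) * ω' t := by
      apply mul_le_mul_of_nonneg_right _ hω't
      exact mul_le_mul_of_nonneg_right (le_max_right _ _) hlg0.le

lemma LBp_squeeze {ω' σ : ℝ → ℝ} {c₁ c₂ T₀ g : ℝ} (hc₁ : 0 < c₁) (hc₂ : 0 < c₂)
    (hT₀ : 1 ≤ T₀) (hsq : ∀ t, T₀ ≤ t → c₁ * σ t ≤ ω' t ∧ ω' t ≤ c₂ * σ t)
    (h : LBp σ g) : LBp ω' g := by
  obtain ⟨c, T, hc, hT, hL⟩ := h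
  refine ⟨c * c₁ / c₂, max T T₀, by positivity, le_trans hT (le_max_left _ _), ?_⟩
  intro t ht
  have htT : T ≤ t := le_trans (le_max_left _ _) ht
  have htT₀ : T₀ ≤ t := le_trans (le_max_right _ _) ht
  have hσt : 0 ≤ σ t := (hL t htT).1
  have hω't : 0 ≤ ω' t := le_trans (by positivity) (hsq t htT₀).1
  refine ⟨hω't, fun l hl => ?_⟩
  have hl0 : (0:ℝ) < l := lt_of_lt_of_le one_pos hl
  have ht0 : (0:ℝ) < t := lt_of_lt_of_le one_pos (le_trans hT htT)
  have hlt : T₀ ≤ l * t := le_trans htT₀ (by nlinarith)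
  have hlg0 : 0 < l ^ (1/g) := Real.rpow_pos_of_pos hl0 _
  have k1 : c₁ * σ (l * t) ≤ ω' (l * t) := (hsq _ hlt).1
  have k2 : c * l ^ (1/g) * σ t ≤ σ (l * t) := (hL t htT).2 l hl
  have k3 : ω' t ≤ c₂ * σ t := (hsq t htT₀).2
  calc c * c₁ / c₂ * l ^ (1/g) * ω' t ≤ c * c₁ / c₂ * l ^ (1/g) * (c₂ * σ t) := by
        exact mul_le_mul_of_nonneg_left k3 (by positivity)
  _ = c₁ * (c * l ^ (1/g) * σ t) := by field_simp
  _ ≤ c₁ * σ (l * t) := mul_le_mul_of_nonneg_left k2 hc₁.le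
  _ ≤ ω' (l * t) := k1

lemma assembled {σ : ℝ → ℝ} (hσ : IsW0 σ)
    (h1 : 0 < gammaIdx σ) (h2 : gammaIdx σ = gammaBarIdx σ) (h3 : gammaBarIdx σ < ⊤)
    {ℓ : ℝ} (hℓ : 0 < ℓ) :
    (∀ g, 0 < g → g < (gammaIdx σ).toReal → UBp (omegaSeq (assocSeq σ ℓ)) g) ∧
    (∀ g, (gammaIdx σ).toReal < g → LBp (omegaSeq (assocSeq σ ℓ)) g) := by
  have hwσ : Wk σ := ⟨hσ.1.2.1.mono (fun x hx => Set.mem_Ici.mpr (le_trans zero_le_one (Set.mem_Ici.mp hx))), hσ.1.2.2⟩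
  obtain ⟨ha0, hU, hL⟩ := hyp_UB_LB hwσ h1 h2 h3
  obtain ⟨T, hT1, hsq⟩ := omegaSeq_squeeze hσ hℓ
  exact ⟨fun g hg hga => UBp_squeeze (by positivity) (by positivity) hT1 hsq (hU g hg hga),
    fun g hga => LBp_squeeze (by positivity) (by positivity) hT1 hsq (hL g hga)⟩


theorem stmt3 (σ τ : ℝ → ℝ) (hσ : IsW0 σ) (hτ : IsW0 τ)
    (h1 : 0 < gammaIdx σ) (h2 : gammaIdx σ = gammaBarIdx σ) (h3 : gammaBarIdx σ < ⊤)
    (h4 : 0 < gammaIdx τ) (h5 : gammaIdx τ = gammaBarIdx τ) (h6 : gammaBarIdx τ < ⊤) :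
    ∀ ℓ : ℝ, 0 < ℓ → ∀ ℓ₁ : ℝ, 0 < ℓ₁ → ∀ ℓ₂ : ℝ, 0 < ℓ₂ →
    ∀ j : ℝ, 0 < j → ∀ j₁ : ℝ, 0 < j₁ → ∀ j₂ : ℝ, 0 < j₂ →
      gammaIdx (omegaSeq (assocSeq σ ℓ)) + gammaIdx (omegaSeq (assocSeq τ j))
          = gammaIdx (lowerConj (omegaSeq (assocSeq σ ℓ₁)) (omegaSeq (assocSeq τ j₁))) ∧
      gammaIdx (lowerConj (omegaSeq (assocSeq σ ℓ₁)) (omegaSeq (assocSeq τ j₁)))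
          = gammaBarIdx (lowerConj (omegaSeq (assocSeq σ ℓ₂)) (omegaSeq (assocSeq τ j₂))) := by
  intro ℓ hℓ ℓ₁ hℓ₁ ℓ₂ hℓ₂ j hj j₁ hj₁ j₂ hj₂
  set a := (gammaIdx σ).toReal with ha
  set b := (gammaIdx τ).toReal with hb
  have hσne : gammaIdx σ ≠ ⊤ := by rw [h2]; exact h3.ne
  have hτne : gammaIdx τ ≠ ⊤ := by rw [h5]; exact h6.ne
  have ha0 : 0 < a := ENNReal.toReal_pos h1.ne' hσne
  have hb0 : 0 < b := ENNReal.toReal_pos h4.ne' hτne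
  have hab : 0 < a + b := by linarith
  -- single indices
  have idxσ : ∀ {ℓ' : ℝ}, 0 < ℓ' →
      gammaIdx (omegaSeq (assocSeq σ ℓ')) = ENNReal.ofReal a := by
    intro ℓ' hℓ'
    obtain ⟨hU, hL⟩ := assembled hσ h1 h2 h3 hℓ'
    exact (idx_eq (omegaSeq_Wt hσ hℓ').wk ha0 hU hL).1
  have idxτ : ∀ {j' : ℝ}, 0 < j' →
      gammaIdx (omegaSeq (assocSeq τ j')) = ENNReal.ofReal b := by
    intro j' hj'
    obtain ⟨hU, hL⟩ := assembled hτ h4 h5 h6 hj'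
    exact (idx_eq (omegaSeq_Wt hτ hj').wk hb0 hU hL).1
  -- conjugate indices
  have idxu : ∀ {ℓ' j' : ℝ}, 0 < ℓ' → 0 < j' →
      gammaIdx (lowerConj (omegaSeq (assocSeq σ ℓ')) (omegaSeq (assocSeq τ j')))
          = ENNReal.ofReal (a + b) ∧
      gammaBarIdx (lowerConj (omegaSeq (assocSeq σ ℓ')) (omegaSeq (assocSeq τ j')))
          = ENNReal.ofReal (a + b) := by
    intro ℓ' j' hℓ' hj'
    obtain ⟨hUσ, hLσ⟩ := assembled hσ h1 h2 h3 hℓ'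
    obtain ⟨hUτ, hLτ⟩ := assembled hτ h4 h5 h6 hj'
    have hwtσ := omegaSeq_Wt hσ hℓ'
    have hwtτ := omegaSeq_Wt hτ hj'
    have hwk : Wk (lowerConj (omegaSeq (assocSeq σ ℓ')) (omegaSeq (assocSeq τ j'))) :=
      ⟨lowerConj_mono hwtσ hwtτ, lowerConj_tend hwtσ hwtτ⟩
    have hU : ∀ g, 0 < g → g < a + b →
        UBp (lowerConj (omegaSeq (assocSeq σ ℓ')) (omegaSeq (assocSeq τ j'))) g := by
      intro g hg hgab
      set g₁ := g * a / (a + b) with hg₁def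
      set g₂ := g * b / (a + b) with hg₂def
      have hg₁0 : 0 < g₁ := by positivity
      have hg₂0 : 0 < g₂ := by positivity
      have hg₁a : g₁ < a := by
        rw [hg₁def, div_lt_iff₀ hab]
        nlinarith
      have hg₂b : g₂ < b := by
        rw [hg₂def, div_lt_iff₀ hab]
        nlinarith
      have hsum : g₁ + g₂ = g := by
        rw [hg₁def, hg₂def]
        field_simp
      have := UBp_lowerConj hwtσ hwtτ hg₁0 hg₂0 (hUσ g₁ hg₁0 hg₁a) (hUτ g₂ hg₂0 hg₂b)
      rwa [hsum] at this
    have hL : ∀ g, a + b < g →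
        LBp (lowerConj (omegaSeq (assocSeq σ ℓ')) (omegaSeq (assocSeq τ j'))) g := by
      intro g hgab
      have hg : 0 < g := lt_trans hab hgab
      set g₁ := g * a / (a + b) with hg₁def
      set g₂ := g * b / (a + b) with hg₂def
      have hg₁0 : 0 < g₁ := by positivity
      have hg₂0 : 0 < g₂ := by positivity
      have hg₁a : a < g₁ := by
        rw [hg₁def, lt_div_iff₀ hab]
        nlinarith
      have hg₂b : b < g₂ := by
        rw [hg₂def, lt_div_iff₀ hab]
        nlinarith
      have hsum : g₁ + g₂ = g := by
        rw [hg₁def, hg₂def]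
        field_simp
      have := LBp_lowerConj hwtσ hwtτ hg₁0 hg₂0 (hLσ g₁ hg₁a) (hLτ g₂ hg₂b)
      rwa [hsum] at this
    exact idx_eq hwk hab hU hL
  refine ⟨?_, ?_⟩
  · rw [idxσ hℓ, idxτ hj, (idxu hℓ₁ hj₁).1]
    exact (ENNReal.ofReal_add ha0.le hb0.le).symm
  · rw [(idxu hℓ₁ hj₁).1, (idxu hℓ₂ hj₂).2]
end Transfer
end
end

section
/- Let σ be a weight function in the class W₀ with associated weight matrix {S^(ℓ) : ℓ > 0} and let α > 0. Then for every ℓ > 0, the associated weight function of the pointwise product sequence S^(ℓ)·G^α satisfies ω_{S^(ℓ)·G^α}(t) = (ω_{S^(ℓ)} ⋆̌ ω_{G^α})(t) for all t ≥ 0, and ω_{S^(ℓ)·G^α} ~ σ ⋆̌ ω_{G^α} ~ σ ⋆̌ id^{1/α}. -/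
open Real Filter Asymptotics Set
open scoped ENNReal Topology

noncomputable section

namespace Stmt6Aux

lemma omegaSeq_eq_sSup_range (M : ℕ → ℝ) (t : ℝ) :
    omegaSeq M t = sSup (Set.range fun p : ℕ => Real.log (t ^ p / M p)) := by
  unfold omegaSeq
  congr 1
  ext z
  simp [Set.range, eq_comm]

lemma csSup_range_eq (f : ℕ → ℝ) (p₀ : ℕ) (h : ∀ p, f p ≤ f p₀) :
    sSup (Set.range f) = f p₀ :=
  le_antisymm (csSup_le (Set.range_nonempty f) (by rintro z ⟨p, rfl⟩; exact h p))
    (le_csSup ⟨f p₀, by rintro z ⟨p, rfl⟩; exact h p⟩ ⟨p₀, rfl⟩)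

lemma exists_max (f : ℕ → ℝ) (P : ℕ) (h : ∀ p, P ≤ p → f p ≤ f 0) :
    ∃ p₀, ∀ p, f p ≤ f p₀ := by
  obtain ⟨p₀, hp₀mem, hp₀⟩ := (Finset.range (P + 1)).exists_max_image f ⟨0, by simp⟩
  refine ⟨p₀, fun p => ?_⟩
  rcases le_or_gt p P with hp | hp
  · exact hp₀ p (Finset.mem_range.mpr (Nat.lt_succ_of_le hp))
  · exact (h p hp.le).trans (hp₀ 0 (by simp))

lemma incr_le (m : ℕ → ℝ) (x : ℝ) (j k : ℕ)
    (h : ∀ i, j ≤ i → i < j + k → m (i + 1) - m i ≤ x) :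
    m (j + k) - m j ≤ k * x := by
  induction k with
  | zero => simp
  | succ k ih =>
    have h1 : m (j + k + 1) - m (j + k) ≤ x := h (j + k) (Nat.le_add_right _ _) (by omega)
    have h2 : m (j + k) - m j ≤ k * x := ih (fun i hi hik => h i hi (by omega))
    have hj : j + (k + 1) = (j + k) + 1 := by omega
    rw [hj]
    push_cast
    linarith

lemma incr_ge (m : ℕ → ℝ) (x : ℝ) (j k : ℕ)
    (h : ∀ i, j ≤ i → i < j + k → x ≤ m (i + 1) - m i) :
    (k : ℝ) * x ≤ m (j + k) - m j := by
  induction k with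
  | zero => simp
  | succ k ih =>
    have h1 : x ≤ m (j + k + 1) - m (j + k) := h (j + k) (Nat.le_add_right _ _) (by omega)
    have h2 : (k : ℝ) * x ≤ m (j + k) - m j := ih (fun i hi hik => h i hi (by omega))
    have hj : j + (k + 1) = (j + k) + 1 := by omega
    rw [hj]
    push_cast
    linarith

lemma convex_sup_char (m : ℕ → ℝ) (x : ℝ) (p₀ : ℕ)
    (h1 : ∀ q, q < p₀ → m (q + 1) - m q ≤ x)
    (h2 : ∀ q, p₀ ≤ q → x ≤ m (q + 1) - m q) :
    ∀ q : ℕ, (q : ℝ) * x - m q ≤ (p₀ : ℝ) * x - m p₀ := by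
  intro q
  rcases le_or_gt p₀ q with hq | hq
  · obtain ⟨k, rfl⟩ := Nat.exists_eq_add_of_le hq
    have := incr_ge m x p₀ k (fun i hi _ => h2 i hi)
    push_cast
    linarith
  · obtain ⟨k, rfl⟩ := Nat.exists_eq_add_of_le hq.le
    have := incr_le m x q k (fun i hi hik => h1 i (by omega))
    push_cast
    linarith

lemma bddAbove_range_aux (m : ℕ → ℝ) (x : ℝ)
    (hms : ∀ c : ℝ, ∃ A : ℝ, ∀ p : ℕ, c * p ≤ m p + A) :
    BddAbove (Set.range fun p : ℕ => (p : ℝ) * x - m p) := by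
  obtain ⟨A, hA⟩ := hms x
  refine ⟨A, ?_⟩
  rintro z ⟨p, rfl⟩
  have h := hA p
  dsimp only
  linarith [mul_comm x (p : ℝ)]

lemma omegaSeq_exp_apply (m : ℕ → ℝ) (u : ℝ) :
    omegaSeq (fun p => Real.exp (m p)) (Real.exp u)
      = sSup (Set.range fun p : ℕ => (p : ℝ) * u - m p) := by
  rw [omegaSeq_eq_sSup_range]
  have : (fun p : ℕ => Real.log (Real.exp u ^ p / Real.exp (m p)))
      = fun p : ℕ => (p : ℝ) * u - m p := by
    funext p
    rw [← Real.exp_nat_mul, ← Real.exp_sub, Real.log_exp]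
  rw [this]

end Stmt6Aux

namespace Stmt6Aux

structure NiceSeq (m : ℕ → ℝ) : Prop where
  zero : m 0 = 0
  nonneg : ∀ p, 0 ≤ m p
  conv : ∀ p : ℕ, m (p + 1) - m p ≤ m (p + 2) - m (p + 1)
  superlin : ∀ c : ℝ, ∃ A : ℝ, ∀ p : ℕ, c * p ≤ m p + A

namespace NiceSeq

variable {m : ℕ → ℝ} (hm : NiceSeq m)

lemma d_mono (hm : NiceSeq m) : Monotone (fun p => m (p + 1) - m p) :=
  monotone_nat_of_le_succ fun p => hm.conv p

lemma d_nonneg (hm : NiceSeq m) (p : ℕ) : 0 ≤ m (p + 1) - m p := by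
  have h0 : 0 ≤ m 1 - m 0 := by
    have := hm.nonneg 1
    rw [hm.zero]; linarith
  exact h0.trans (hm.d_mono (Nat.zero_le p))

lemma le_omega (hm : NiceSeq m) (u : ℝ) (p : ℕ) :
    (p : ℝ) * u - m p ≤ omegaSeq (fun q => Real.exp (m q)) (Real.exp u) := by
  rw [omegaSeq_exp_apply]
  exact le_csSup (bddAbove_range_aux m u hm.superlin) ⟨p, rfl⟩

lemma omega_nonneg (hm : NiceSeq m) (u : ℝ) :
    0 ≤ omegaSeq (fun q => Real.exp (m q)) (Real.exp u) := by
  have := hm.le_omega u 0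
  simpa [hm.zero] using this

lemma omega_eq (hm : NiceSeq m) (x : ℝ) (p₀ : ℕ)
    (h1 : ∀ q, q < p₀ → m (q + 1) - m q ≤ x)
    (h2 : x ≤ m (p₀ + 1) - m p₀) :
    omegaSeq (fun q => Real.exp (m q)) (Real.exp x) = (p₀ : ℝ) * x - m p₀ := by
  rw [omegaSeq_exp_apply]
  exact csSup_range_eq _ p₀ (convex_sup_char m x p₀ h1
    (fun q hq => h2.trans (hm.d_mono hq)))

end NiceSeq

lemma omegaSeq_zero (M : ℕ → ℝ) (hM : M 0 = 1) : omegaSeq M 0 = 0 := by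
  unfold omegaSeq
  have hset : {z : ℝ | ∃ p : ℕ, z = Real.log ((0 : ℝ) ^ p / M p)} = {0} := by
    ext z
    simp only [mem_setOf_eq, mem_singleton_iff]
    constructor
    · rintro ⟨p, rfl⟩
      cases p with
      | zero => simp [hM]
      | succ p => simp [zero_pow (Nat.succ_ne_zero p)]
    · rintro rfl
      exact ⟨0, by simp [hM]⟩
  rw [hset, csSup_singleton]

theorem omega_prod {m n : ℕ → ℝ} (hm : NiceSeq m) (hn : NiceSeq n) :
    ∀ t : ℝ, 0 ≤ t →
      omegaSeq (fun p => Real.exp (m p) * Real.exp (n p)) t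
        = lowerConj (omegaSeq fun p => Real.exp (m p)) (omegaSeq fun p => Real.exp (n p)) t := by
  have hMN : (fun p => Real.exp (m p) * Real.exp (n p)) = fun p => Real.exp (m p + n p) := by
    funext p; rw [Real.exp_add]
  intro t ht
  rcases eq_or_lt_of_le ht with rfl | htpos
  · -- t = 0
    rw [hMN, omegaSeq_zero _ (by simp [hm.zero, hn.zero])]
    unfold lowerConj
    have hg0 : omegaSeq (fun p => Real.exp (n p)) 0 = 0 :=
      omegaSeq_zero _ (by simp [hn.zero])
    have hlb : ∀ z ∈ {z : ℝ | ∃ s : ℝ, 0 < s ∧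
        z = omegaSeq (fun p => Real.exp (m p)) s
          + omegaSeq (fun p => Real.exp (n p)) ((0:ℝ) / s)}, (0:ℝ) ≤ z := by
      rintro z ⟨s, hs, rfl⟩
      rw [zero_div, hg0, add_zero]
      have := hm.omega_nonneg (Real.log s)
      rwa [Real.exp_log hs] at this
    have hmem : (0:ℝ) ∈ {z : ℝ | ∃ s : ℝ, 0 < s ∧
        z = omegaSeq (fun p => Real.exp (m p)) s
          + omegaSeq (fun p => Real.exp (n p)) ((0:ℝ) / s)} := by
      refine ⟨1, one_pos, ?_⟩
      rw [zero_div, hg0, add_zero]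
      have h1 : (1:ℝ) = Real.exp 0 := by simp
      rw [h1, hm.omega_eq 0 0 (by omega) (hm.d_nonneg 0)]
      simp [hm.zero]
    exact le_antisymm (le_csInf ⟨0, hmem⟩ hlb) (csInf_le ⟨0, hlb⟩ hmem)
  · -- t > 0
    set u := Real.log t with hu
    have hte : t = Real.exp u := (Real.exp_log htpos).symm
    set h : ℕ → ℝ := fun p => m p + n p with hh
    have hnice : NiceSeq h := by
      refine ⟨by simp [hh, hm.zero, hn.zero],
        fun p => add_nonneg (hm.nonneg p) (hn.nonneg p),
        fun p => by have := hm.conv p; have := hn.conv p; simp only [hh]; linarith,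
        fun c => ?_⟩
      obtain ⟨A, hA⟩ := hm.superlin c
      exact ⟨A, fun p => (hA p).trans (by have := hn.nonneg p; simp only [hh]; linarith)⟩
    set f : ℕ → ℝ := fun p => (p : ℝ) * u - h p with hf
    -- existence of a maximizer
    obtain ⟨A, hA⟩ := hnice.superlin (u + 1)
    have hmax' : ∀ p : ℕ, Nat.ceil A ≤ p → f p ≤ f 0 := by
      intro p hp
      have h1 := hA p
      simp only [hh] at h1
      have h2 : A ≤ (p : ℝ) := le_trans (Nat.le_ceil A) (by exact_mod_cast hp)
      simp only [hf, hh, Nat.cast_zero, zero_mul, hm.zero, hn.zero]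
      have h3 : (u + 1) * (p : ℝ) = (p : ℝ) * u + p := by ring
      linarith
    obtain ⟨p₀, hp₀⟩ := exists_max f (Nat.ceil A) hmax'
    -- basic consequences of maximality
    have hup : u ≤ h (p₀ + 1) - h p₀ := by
      have := hp₀ (p₀ + 1)
      simp only [hf] at this
      push_cast at this
      linarith
    -- choose the splitting point x
    have key : ∃ x : ℝ, (∀ q, q < p₀ → m (q + 1) - m q ≤ x) ∧ (x ≤ m (p₀ + 1) - m p₀) ∧
        (∀ q, q < p₀ → n (q + 1) - n q ≤ u - x) ∧ (u - x ≤ n (p₀ + 1) - n p₀) := by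
      cases p₀ with
      | zero =>
        refine ⟨min (m 1 - m 0) u, by omega, min_le_left _ _, by omega, ?_⟩
        rcases min_cases (m 1 - m 0) u with ⟨hmin, hle⟩ | ⟨hmin, hle⟩
        · rw [hmin]
          have := hup
          simp only [hh] at this
          linarith
        · rw [hmin]
          have := hn.d_nonneg 0
          linarith
      | succ k =>
        have hdown : h (k + 1) - h k ≤ u := by
          have := hp₀ k
          simp only [hf] at this
          push_cast at this
          linarith
        refine ⟨max (m (k + 1) - m k) (u - (n (k + 2) - n (k + 1))), ?_, ?_, ?_, ?_⟩
        · intro q hq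
          exact le_trans (hm.d_mono (by omega : q ≤ k)) (le_max_left _ _)
        · refine max_le (hm.conv k) ?_
          have := hup
          simp only [hh] at this
          linarith
        · intro q hq
          have hq' : n (q + 1) - n q ≤ n (k + 1) - n k := hn.d_mono (by omega : q ≤ k)
          have hmaxle : max (m (k + 1) - m k) (u - (n (k + 2) - n (k + 1)))
              ≤ u - (n (k + 1) - n k) := by
            refine max_le ?_ ?_
            · have := hdown; simp only [hh] at this; linarith
            · have := hn.conv k; linarith
          linarith
        · have := le_max_right (m (k + 1) - m k) (u - (n (k + 2) - n (k + 1)))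
          linarith
    obtain ⟨x, h1m, h2m, h1n, h2n⟩ := key
    have hOM : omegaSeq (fun q => Real.exp (m q)) (Real.exp x) = (p₀ : ℝ) * x - m p₀ :=
      hm.omega_eq x p₀ h1m h2m
    have hON : omegaSeq (fun q => Real.exp (n q)) (Real.exp (u - x))
        = (p₀ : ℝ) * (u - x) - n p₀ := hn.omega_eq (u - x) p₀ h1n h2n
    -- LHS value
    have hLHS : omegaSeq (fun p => Real.exp (m p) * Real.exp (n p)) t = f p₀ := by
      rw [hMN, hte, omegaSeq_exp_apply]
      exact csSup_range_eq _ p₀ hp₀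
    rw [hLHS]
    -- RHS
    unfold lowerConj
    set Z := {z : ℝ | ∃ s : ℝ, 0 < s ∧
        z = omegaSeq (fun p => Real.exp (m p)) s
          + omegaSeq (fun p => Real.exp (n p)) (t / s)} with hZ
    have hlb : ∀ z ∈ Z, f p₀ ≤ z := by
      rintro z ⟨s, hs, rfl⟩
      have hsx : s = Real.exp (Real.log s) := (Real.exp_log hs).symm
      have hts : t / s = Real.exp (u - Real.log s) := by
        rw [Real.exp_sub, ← hte, Real.exp_log hs]
      have b1 := hm.le_omega (Real.log s) p₀
      have b2 := hn.le_omega (u - Real.log s) p₀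
      rw [← hsx] at b1
      rw [← hts] at b2
      simp only [hf, hh]
      linarith
    have hmem : f p₀ ∈ Z := by
      refine ⟨Real.exp x, Real.exp_pos x, ?_⟩
      have hts : t / Real.exp x = Real.exp (u - x) := by
        rw [Real.exp_sub, ← hte]
      rw [hts, hOM, hON]
      simp only [hf, hh]
      ring
    exact le_antisymm (le_csInf ⟨_, hmem⟩ hlb) (csInf_le ⟨f p₀, hlb⟩ hmem)

end Stmt6Aux

namespace Stmt6Aux

section Sigma

variable {σ : ℝ → ℝ} (hσ : IsW0 σ)
include hσ

lemma sig_nonneg : ∀ t, 0 ≤ σ t := hσ.1.1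

lemma sig_exp_mono : Monotone fun y => σ (Real.exp y) := fun a b hab =>
  hσ.1.2.1 (Real.exp_pos a).le (Real.exp_pos b).le (Real.exp_le_exp.mpr hab)

lemma sig_one : σ (Real.exp 0) = 0 := by
  rw [Real.exp_zero]
  exact hσ.2.2.1 1 ⟨zero_le_one, le_refl 1⟩

lemma log_le_weight (c : ℝ) (hc : 0 < c) :
    ∃ A : ℝ, 0 ≤ A ∧ ∀ y : ℝ, 0 ≤ y → c * y ≤ σ (Real.exp y) + A := by
  have hlo := hσ.2.2.2.1
  rw [isLittleO_iff] at hlo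
  have hev := hlo (show (0:ℝ) < 1 / c by positivity)
  rw [eventually_atTop] at hev
  obtain ⟨T, hT⟩ := hev
  refine ⟨max 0 (c * Real.log (max T 1)), le_max_left _ _, fun y hy => ?_⟩
  rcases le_or_gt (max T 1) (Real.exp y) with hcase | hcase
  · have h1 := hT (Real.exp y) (le_trans (le_max_left _ _) hcase)
    rw [Real.log_exp, Real.norm_eq_abs, Real.norm_eq_abs,
      abs_of_nonneg hy, abs_of_nonneg (sig_nonneg hσ _)] at h1
    have h2 : c * y ≤ σ (Real.exp y) := by
      rw [div_mul_eq_mul_div, le_div_iff₀ hc] at h1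
      nlinarith
    have := le_max_left (0:ℝ) (c * Real.log (max T 1))
    linarith
  · have h1 : y ≤ Real.log (max T 1) := by
      rw [← Real.log_exp y]
      exact Real.log_le_log (Real.exp_pos y) hcase.le
    have h2 : c * y ≤ c * Real.log (max T 1) := by nlinarith
    have h3 := sig_nonneg hσ (Real.exp y)
    have := le_max_right (0:ℝ) (c * Real.log (max T 1))
    linarith

-- The defining set of phiStar
lemma phiStar_set_nonempty (x : ℝ) :
    Set.Nonempty {z : ℝ | ∃ y : ℝ, 0 ≤ y ∧ z = x * y - σ (Real.exp y)} :=
  ⟨x * 0 - σ (Real.exp 0), 0, le_refl 0, rfl⟩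

lemma phiStar_set_bddAbove (x : ℝ) :
    BddAbove {z : ℝ | ∃ y : ℝ, 0 ≤ y ∧ z = x * y - σ (Real.exp y)} := by
  obtain ⟨A, hA0, hA⟩ := log_le_weight hσ (|x| + 1) (by positivity)
  refine ⟨A, ?_⟩
  rintro z ⟨y, hy, rfl⟩
  have h1 := hA y hy
  have h2 : x * y ≤ (|x| + 1) * y := by
    have := le_abs_self x
    nlinarith
  linarith

lemma le_phiStar (x y : ℝ) (hy : 0 ≤ y) :
    x * y - σ (Real.exp y) ≤ phiStar σ x :=
  le_csSup (phiStar_set_bddAbove hσ x) ⟨y, hy, rfl⟩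

lemma phiStar_le (x B : ℝ) (h : ∀ y : ℝ, 0 ≤ y → x * y - σ (Real.exp y) ≤ B) :
    phiStar σ x ≤ B :=
  csSup_le (phiStar_set_nonempty hσ x) (by rintro z ⟨y, hy, rfl⟩; exact h y hy)

lemma phiStar_nonneg (x : ℝ) : 0 ≤ phiStar σ x := by
  have := le_phiStar hσ x 0 (le_refl 0)
  rw [sig_one hσ] at this
  linarith

lemma phiStar_mono {x₁ x₂ : ℝ} (h : x₁ ≤ x₂) : phiStar σ x₁ ≤ phiStar σ x₂ := by
  refine phiStar_le hσ _ _ (fun y hy => ?_)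
  have h1 := le_phiStar hσ x₂ y hy
  nlinarith

lemma phiStar_midpoint (a b : ℝ) :
    phiStar σ ((a + b) / 2) ≤ (phiStar σ a + phiStar σ b) / 2 := by
  refine phiStar_le hσ _ _ (fun y hy => ?_)
  have h1 := le_phiStar hσ a y hy
  have h2 := le_phiStar hσ b y hy
  linarith

lemma phiStar_zero : phiStar σ 0 = 0 := by
  refine le_antisymm (phiStar_le hσ _ _ (fun y _ => ?_)) (phiStar_nonneg hσ 0)
  have := sig_nonneg hσ (Real.exp y)
  linarith

variable {ℓ : ℝ} (hℓ : 0 < ℓ)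
include hℓ

lemma nice_mm : NiceSeq (fun p : ℕ => (1 / ℓ) * phiStar σ (ℓ * (p : ℝ))) := by
  constructor
  · simp [phiStar_zero hσ]
  · intro p
    have := phiStar_nonneg hσ (ℓ * (p : ℝ))
    positivity
  · intro p
    have hmid := phiStar_midpoint hσ (ℓ * (p : ℝ)) (ℓ * ((p : ℝ) + 2))
    have harg : (ℓ * (p : ℝ) + ℓ * ((p : ℝ) + 2)) / 2 = ℓ * ((p : ℝ) + 1) := by ring
    rw [harg] at hmid
    have hinv : 0 < 1 / ℓ := by positivity
    push_cast
    nlinarith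
  · intro c
    refine ⟨(1 / ℓ) * σ (Real.exp |c|) + 1, fun p => ?_⟩
    have h1 := le_phiStar hσ (ℓ * (p : ℝ)) |c| (abs_nonneg c)
    have h2 : (1 / ℓ) * (ℓ * (p : ℝ) * |c| - σ (Real.exp |c|))
        ≤ (1 / ℓ) * phiStar σ (ℓ * (p : ℝ)) := by
      have hinv : 0 < 1 / ℓ := by positivity
      nlinarith
    have h3 : (1 / ℓ) * (ℓ * (p : ℝ) * |c|) = (p : ℝ) * |c| := by
      field_simp
    have h4 : c * (p : ℝ) ≤ (p : ℝ) * |c| := by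
      have := le_abs_self c
      have hp : (0:ℝ) ≤ p := Nat.cast_nonneg p
      nlinarith
    have h5 : (1 / ℓ) * (ℓ * (p : ℝ) * |c| - σ (Real.exp |c|))
        = (p : ℝ) * |c| - (1 / ℓ) * σ (Real.exp |c|) := by
      field_simp
    linarith [h5 ▸ h2]

end Sigma

-- factorial lemmas
lemma pow_sub_le_factorial (K : ℕ) (hK : 1 ≤ K) : ∀ p : ℕ, K ≤ p → K ^ (p - K) ≤ p.factorial := by
  intro p hp
  induction p with
  | zero => simpa using hp
  | succ p ih =>
    rcases Nat.lt_or_ge K (p + 1) with hlt | hge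
    · have hKp : K ≤ p := by omega
      have h1 : p + 1 - K = (p - K) + 1 := by omega
      rw [h1, pow_succ, Nat.factorial_succ]
      have h2 := ih hKp
      calc K ^ (p - K) * K ≤ p.factorial * K := Nat.mul_le_mul_right K h2
        _ ≤ p.factorial * (p + 1) := Nat.mul_le_mul_left _ (by omega)
        _ = (p + 1) * p.factorial := Nat.mul_comm _ _
    · have : K = p + 1 := by omega
      subst this
      simp only [Nat.sub_self, pow_zero]
      exact Nat.factorial_pos _

lemma nice_nn {α : ℝ} (hα : 0 < α) :
    NiceSeq (fun p : ℕ => Real.log (p.factorial : ℝ) * α) := by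
  have hd : ∀ p : ℕ, Real.log ((p+1).factorial : ℝ) * α - Real.log (p.factorial : ℝ) * α
      = Real.log ((p : ℝ) + 1) * α := by
    intro p
    have h1 : ((p+1).factorial : ℝ) = ((p : ℝ) + 1) * (p.factorial : ℝ) := by
      rw [Nat.factorial_succ]
      push_cast
      ring
    rw [h1, Real.log_mul (by positivity) (by exact_mod_cast (Nat.factorial_pos p).ne')]
    ring
  constructor
  · simp
  · intro p
    have h1 : (1:ℝ) ≤ (p.factorial : ℝ) := by exact_mod_cast Nat.one_le_iff_ne_zero.mpr (Nat.factorial_pos p).ne'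
    have := Real.log_nonneg h1
    positivity
  · intro p
    rw [show p + 2 = (p + 1) + 1 by ring]
    rw [hd p, hd (p+1)]
    have h1 : Real.log ((p : ℝ) + 1) ≤ Real.log ((p : ℝ) + 1 + 1) :=
      Real.log_le_log (by positivity) (by push_cast; linarith)
    push_cast
    nlinarith
  · intro c
    set K : ℕ := max 1 (Nat.ceil (Real.exp (|c| / α)))
    have hK1 : 1 ≤ K := le_max_left _ _
    have hKc : Real.exp (|c| / α) ≤ (K : ℝ) := by
      refine le_trans (Nat.le_ceil _) ?_
      exact_mod_cast le_max_right 1 (Nat.ceil (Real.exp (|c| / α)))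
    have hlogK : |c| / α ≤ Real.log (K : ℝ) := by
      rw [← Real.log_exp (|c| / α)]
      exact Real.log_le_log (Real.exp_pos _) hKc
    refine ⟨|c| * K, fun p => ?_⟩
    have hcp : c * (p : ℝ) ≤ |c| * (p : ℝ) := by
      have := le_abs_self c
      have hp : (0:ℝ) ≤ p := Nat.cast_nonneg p
      nlinarith
    have hmain : |c| * (p : ℝ) - |c| * K ≤ Real.log (p.factorial : ℝ) * α := by
      rcases Nat.lt_or_ge p K with hpK | hpK
      · have h1 : (1:ℝ) ≤ (p.factorial : ℝ) := by
          exact_mod_cast Nat.one_le_iff_ne_zero.mpr (Nat.factorial_pos p).ne'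
        have h2 := Real.log_nonneg h1
        have h3 : (p : ℝ) ≤ K := by exact_mod_cast hpK.le
        nlinarith [abs_nonneg c]
      · have h1 := pow_sub_le_factorial K hK1 p hpK
        have h2 : ((K : ℝ)) ^ (p - K) ≤ (p.factorial : ℝ) := by exact_mod_cast h1
        have h3 : Real.log ((K : ℝ) ^ (p - K)) ≤ Real.log (p.factorial : ℝ) :=
          Real.log_le_log (by positivity) h2
        rw [Real.log_pow] at h3
        have h4 : ((p - K : ℕ) : ℝ) = (p : ℝ) - K := by
          have : K ≤ p := hpK
          push_cast [this]
          ring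
        rw [h4] at h3
        have h5 : |c| * ((p : ℝ) - K) ≤ (((p : ℝ) - K) * Real.log K) * α := by
          have hpk0 : (0:ℝ) ≤ (p : ℝ) - K := by
            have : (K:ℝ) ≤ p := by exact_mod_cast hpK
            linarith
          have : |c| ≤ Real.log (K:ℝ) * α := by
            rw [div_le_iff₀ hα] at hlogK
            linarith
          nlinarith
        nlinarith [h3, hα]
    linarith
  

end Stmt6Aux

namespace Stmt6Aux

section OmegaS

variable {σ : ℝ → ℝ} (hσ : IsW0 σ) {ℓ : ℝ} (hℓ : 0 < ℓ)

lemma assoc_eq : assocSeq σ ℓ = fun p : ℕ => Real.exp ((1/ℓ) * phiStar σ (ℓ * (p:ℝ))) := rfl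

include hσ hℓ

lemma omegaS_nonneg (s : ℝ) (hs : 0 < s) : 0 ≤ omegaSeq (assocSeq σ ℓ) s := by
  have h := (nice_mm hσ hℓ).omega_nonneg (Real.log s)
  rwa [Real.exp_log hs, ← assoc_eq] at h

lemma omegaS_le (s : ℝ) (hs : 0 < s) :
    omegaSeq (assocSeq σ ℓ) s ≤ max 1 (1/ℓ) * σ s := by
  set u := Real.log s with hu
  have heq : omegaSeq (assocSeq σ ℓ) s
      = sSup (Set.range fun p : ℕ => (p : ℝ) * u - (1/ℓ) * phiStar σ (ℓ * (p:ℝ))) := by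
    rw [assoc_eq, ← Real.exp_log hs, ← hu, omegaSeq_exp_apply]
  have hCσ : σ s / ℓ ≤ max 1 (1/ℓ) * σ s := by
    have h1 := sig_nonneg hσ s
    have h2 := le_max_right (1:ℝ) (1/ℓ)
    have h3 : σ s / ℓ = (1/ℓ) * σ s := by ring
    nlinarith
  have hC0 : 0 ≤ max 1 (1/ℓ) * σ s := by
    have h1 := sig_nonneg hσ s
    have h2 : (0:ℝ) ≤ max 1 (1/ℓ) := le_trans zero_le_one (le_max_left _ _)
    positivity
  rw [heq]
  rcases le_or_gt u 0 with hu0 | hu0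
  · refine csSup_le (Set.range_nonempty _) ?_
    rintro z ⟨p, rfl⟩
    have hnn := (nice_mm hσ hℓ).nonneg p
    have hpu : (p:ℝ) * u ≤ 0 := mul_nonpos_of_nonneg_of_nonpos (Nat.cast_nonneg p) hu0
    dsimp only
    linarith
  · refine csSup_le (Set.range_nonempty _) ?_
    rintro z ⟨p, rfl⟩
    have h1 := le_phiStar hσ (ℓ * (p:ℝ)) u hu0.le
    have hσu : σ (Real.exp u) = σ s := by rw [hu, Real.exp_log hs]
    rw [hσu] at h1
    have h2 : (1/ℓ) * (ℓ * (p:ℝ) * u - σ s) ≤ (1/ℓ) * phiStar σ (ℓ * (p:ℝ)) := by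
      have hinv : (0:ℝ) < 1/ℓ := by positivity
      nlinarith
    have h3 : (1/ℓ) * (ℓ * (p:ℝ) * u - σ s) = (p:ℝ) * u - σ s / ℓ := by
      field_simp
    rw [h3] at h2
    dsimp only
    linarith

lemma omegaS_ge (s : ℝ) (hs : 1 ≤ s) :
    σ s / ℓ - Real.log s ≤ omegaSeq (assocSeq σ ℓ) s := by
  have hs0 : (0:ℝ) < s := lt_of_lt_of_le one_pos hs
  set u := Real.log s with hu
  have hu0 : 0 ≤ u := Real.log_nonneg hs
  set φ : ℝ → ℝ := fun y => σ (Real.exp y) with hφ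
  have hσs : φ u = σ s := by
    rw [hu]
    show σ (Real.exp (Real.log s)) = σ s
    rw [Real.exp_log hs0]
  have hconv := hσ.2.2.2.2
  have hmono : Monotone φ := sig_exp_mono hσ
  refine le_of_forall_pos_le_add ?_
  intro ε hε
  set s₁ := φ (u + 1) - φ u with hs₁
  have hs₁0 : 0 ≤ s₁ := by
    have := hmono (by linarith : u ≤ u + 1)
    simp only [hs₁]
    linarith
  set δ := min 1 (ℓ * ε / (s₁ + 1)) with hδ
  have hδ0 : 0 < δ := lt_min one_pos (by positivity)
  have hδ1 : δ ≤ 1 := min_le_left _ _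
  set c := (φ (u + δ) - φ u) / δ with hc
  have hcδ : c * δ = φ (u + δ) - φ u := by
    rw [hc, div_mul_cancel₀ _ hδ0.ne']
  have hc0 : 0 ≤ c := by
    have h1 : φ u ≤ φ (u + δ) := hmono (by linarith)
    exact div_nonneg (by linarith) hδ0.le
  have slope : ∀ a b d : ℝ, a < b → b < d → (φ b - φ a)/(b-a) ≤ (φ d - φ b)/(d-b) :=
    fun a b d hab hbd => hconv.slope_mono_adjacent (mem_univ a) (mem_univ d) hab hbd
  have hcδ0 : 0 ≤ c * δ := mul_nonneg hc0 hδ0.le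
  have K : ∀ y : ℝ, 0 ≤ y → c * y - φ y ≤ c * u - φ u + c * δ := by
    intro y hy
    rcases lt_trichotomy y (u + δ) with hlt | heq | hgt
    · rcases le_or_gt y u with hyu | hyu
      · rcases eq_or_lt_of_le hyu with rfl | hyu'
        · linarith
        · have hsl := slope y u (u + δ) hyu' (by linarith)
          rw [show u + δ - u = δ from by ring, ← hc] at hsl
          have h3 : φ u - φ y ≤ c * (u - y) :=
            (div_le_iff₀ (by linarith : (0:ℝ) < u - y)).mp hsl
          have h4 : c * (u - y) = c * u - c * y := by ring
          linarith
      · have h1 : φ u ≤ φ y := hmono hyu.le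
        have h2 : c * y ≤ c * (u + δ) := by nlinarith
        have h3 : c * (u + δ) = c * u + c * δ := by ring
        linarith
    · subst heq
      have h1 : c * (u + δ) = c * u + c * δ := by ring
      linarith
    · have hsl := slope u (u + δ) y (by linarith) hgt
      rw [show u + δ - u = δ from by ring, ← hc] at hsl
      have h3 : c * (y - (u + δ)) ≤ φ y - φ (u + δ) :=
        (le_div_iff₀ (by linarith : (0:ℝ) < y - (u + δ))).mp hsl
      have h4 : c * (y - (u + δ)) = c * y - c * u - c * δ := by ring
      linarith
  have hcs₁ : c ≤ s₁ := by
    rcases eq_or_lt_of_le hδ1 with hδe | hδlt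
    · have hce : c = s₁ := by rw [hc, hδe, div_one, hs₁]
      exact le_of_eq hce
    · have hsl := slope u (u + δ) (u + 1) (by linarith) (by linarith)
      rw [show u + δ - u = δ from by ring, ← hc] at hsl
      have h3 : c * ((u+1) - (u + δ)) ≤ φ (u+1) - φ (u + δ) :=
        (le_div_iff₀ (by linarith : (0:ℝ) < (u+1) - (u + δ))).mp hsl
      have h4 : c * ((u+1) - (u + δ)) = c - c * δ := by ring
      rw [h4] at h3
      have h5 : φ (u+1) - φ (u + δ) = s₁ - c * δ := by
        rw [hs₁]
        linarith [hcδ]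
      linarith [h5 ▸ h3]
  have hcδε : c * δ ≤ ℓ * ε := by
    have hδ2 : δ ≤ ℓ * ε / (s₁ + 1) := min_le_right _ _
    have h1 : c * δ ≤ s₁ * (ℓ * ε / (s₁ + 1)) := mul_le_mul hcs₁ hδ2 hδ0.le hs₁0
    have h2 : s₁ * (ℓ * ε / (s₁ + 1)) ≤ ℓ * ε := by
      rw [mul_div_assoc', div_le_iff₀ (by linarith : (0:ℝ) < s₁ + 1)]
      nlinarith
    linarith
  set p : ℕ := Nat.floor (c / ℓ) with hp
  have hpc : ℓ * (p:ℝ) ≤ c := by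
    have h1 : (p:ℝ) ≤ c / ℓ := Nat.floor_le (by positivity)
    rw [le_div_iff₀ hℓ] at h1
    linarith [mul_comm (p:ℝ) ℓ]
  have hpc2 : c / ℓ < (p:ℝ) + 1 := Nat.lt_floor_add_one _
  have hAB : phiStar σ (ℓ * (p:ℝ)) ≤ c * u - φ u + c * δ :=
    le_trans (phiStar_mono hσ hpc) (phiStar_le hσ _ _ K)
  have hle := (nice_mm hσ hℓ).le_omega u p
  rw [show Real.exp u = s from by rw [hu]; exact Real.exp_log hs0, ← assoc_eq] at hle
  have hmm : (1/ℓ) * phiStar σ (ℓ * (p:ℝ)) ≤ (1/ℓ) * (c * u - φ u + c * δ) := by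
    have hinv : (0:ℝ) < 1/ℓ := by positivity
    nlinarith
  have hdiv : (1/ℓ) * (c * u - φ u + c * δ) = (c/ℓ) * u - φ u/ℓ + (c*δ)/ℓ := by
    field_simp
    try ring
  have hcde : (c*δ)/ℓ ≤ ε := by
    rw [div_le_iff₀ hℓ]
    linarith [mul_comm ε ℓ]
  have hkey : 0 ≤ ((p:ℝ) * u + u - (c/ℓ) * u) := by
    nlinarith [mul_nonneg (sub_nonneg.mpr hpc2.le) hu0]
  rw [hdiv] at hmm
  rw [← hσs]
  linarith

end OmegaS

end Stmt6Aux

namespace Stmt6Aux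

section OmegaG

variable {α : ℝ} (hα : 0 < α)
include hα

lemma gevrey_eq : gevrey α = fun p : ℕ => Real.exp (Real.log (p.factorial : ℝ) * α) := by
  funext p
  rw [gevrey, Real.rpow_def_of_pos (by exact_mod_cast Nat.factorial_pos p)]

lemma omegaG_zero : omegaSeq (gevrey α) 0 = 0 :=
  omegaSeq_zero _ (by simp [gevrey])

lemma omegaG_nonneg (t : ℝ) (ht : 0 ≤ t) : 0 ≤ omegaSeq (gevrey α) t := by
  rcases eq_or_lt_of_le ht with rfl | ht0
  · rw [omegaG_zero hα]
  · have h := (nice_nn hα).omega_nonneg (Real.log t)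
    rwa [Real.exp_log ht0, ← gevrey_eq hα] at h

lemma omegaG_eq_sSup (t : ℝ) (ht : 0 < t) :
    omegaSeq (gevrey α) t = sSup (Set.range fun p : ℕ =>
      (p : ℝ) * Real.log t - Real.log (p.factorial : ℝ) * α) := by
  rw [gevrey_eq hα, ← Real.exp_log ht, omegaSeq_exp_apply, Real.log_exp]

lemma omegaG_le (t : ℝ) (ht : 0 < t) :
    omegaSeq (gevrey α) t ≤ α * t ^ (1/α) := by
  rw [omegaG_eq_sSup hα t ht]
  set u := Real.log t with hu
  set v := t ^ (1/α) with hv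
  have hv0 : 0 < v := Real.rpow_pos_of_pos ht _
  have hlogv : Real.log v = (1/α) * u := by rw [hv, Real.log_rpow ht]
  refine csSup_le (Set.range_nonempty _) ?_
  rintro z ⟨p, rfl⟩
  dsimp only
  have hfac0 : (0:ℝ) < (p.factorial : ℝ) := by exact_mod_cast Nat.factorial_pos p
  have hsum : v ^ p / (p.factorial : ℝ) ≤ Real.exp v := by
    refine le_trans ?_ (Real.sum_le_exp_of_nonneg hv0.le (p + 1))
    refine Finset.single_le_sum (f := fun i => v ^ i / (i.factorial : ℝ)) ?_ ?_
    · intro i _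
      positivity
    · exact Finset.self_mem_range_succ p
  have hlog : Real.log (v ^ p / (p.factorial : ℝ)) ≤ v := by
    rw [Real.log_le_iff_le_exp (by positivity)]
    exact hsum
  rw [Real.log_div (by positivity) hfac0.ne', Real.log_pow] at hlog
  -- hlog : p * log v - log p! ≤ v
  have hpu : (p : ℝ) * u = α * ((p : ℝ) * Real.log v) := by
    rw [hlogv]
    field_simp
  rw [hpu]
  nlinarith [hlog]

lemma omegaG_ge_log (t : ℝ) (ht : 1 ≤ t) :
    Real.log t ≤ omegaSeq (gevrey α) t := by
  have ht0 : (0:ℝ) < t := lt_of_lt_of_le one_pos ht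
  have h := (nice_nn hα).le_omega (Real.log t) 1
  rw [Real.exp_log ht0, ← gevrey_eq hα] at h
  simpa using h

lemma omegaG_rpow_le :
    ∀ t : ℝ, 0 ≤ t → t ^ (1/α) ≤ (Real.exp 1 / α) * omegaSeq (gevrey α) t + 2 * Real.exp 1 := by
  intro t ht
  have he1 : (0:ℝ) < Real.exp 1 := Real.exp_pos 1
  rcases eq_or_lt_of_le ht with rfl | ht0
  · rw [omegaG_zero hα, Real.zero_rpow (by positivity : 1/α ≠ 0)]
    positivity
  set u := Real.log t with hu
  set v := t ^ (1/α) with hv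
  have hv0 : 0 < v := Real.rpow_pos_of_pos ht0 _
  have hW0 : 0 ≤ omegaSeq (gevrey α) t := omegaG_nonneg hα t ht
  rcases le_or_gt v (Real.exp 1) with hve | hve
  · nlinarith [mul_nonneg (le_of_lt (div_pos he1 hα)) hW0]
  · -- main case
    have hlogv : Real.log v = (1/α) * u := by rw [hv, Real.log_rpow ht0]
    set p : ℕ := Nat.floor (v / Real.exp 1) with hp
    have hve1 : 1 ≤ v / Real.exp 1 := by
      rw [le_div_iff₀ he1]
      linarith
    have hp1 : 1 ≤ p := Nat.le_floor (by exact_mod_cast hve1)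
    have hp0 : (0:ℝ) < (p:ℝ) := by exact_mod_cast hp1
    have hple : (p:ℝ) ≤ v / Real.exp 1 := Nat.floor_le (by positivity)
    have hpge : v / Real.exp 1 < (p:ℝ) + 1 := Nat.lt_floor_add_one _
    have hfac : Real.log (p.factorial : ℝ) ≤ (p:ℝ) * Real.log (p:ℝ) := by
      have h1 : (p.factorial : ℝ) ≤ (p:ℝ) ^ p := by exact_mod_cast Nat.factorial_le_pow p
      have h2 : Real.log (p.factorial : ℝ) ≤ Real.log ((p:ℝ) ^ p) :=
        Real.log_le_log (by exact_mod_cast Nat.factorial_pos p) h1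
      rwa [Real.log_pow] at h2
    have hvp : Real.exp 1 ≤ v / (p:ℝ) := by
      rw [le_div_iff₀ hp0]
      rw [le_div_iff₀ he1] at hple
      linarith [mul_comm (p:ℝ) (Real.exp 1)]
    have hlogvp : 1 ≤ Real.log v - Real.log (p:ℝ) := by
      have h1 : Real.log (Real.exp 1) ≤ Real.log (v / (p:ℝ)) :=
        Real.log_le_log (by positivity) hvp
      rwa [Real.log_exp, Real.log_div hv0.ne' hp0.ne'] at h1
    have hterm : α * ((p:ℝ) * Real.log v - (p:ℝ) * Real.log (p:ℝ)) ≥ α * (p:ℝ) := by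
      have h1 : (p:ℝ) * Real.log v - (p:ℝ) * Real.log (p:ℝ)
          = (p:ℝ) * (Real.log v - Real.log (p:ℝ)) := by ring
      rw [h1]
      have h2 : (p:ℝ) ≤ (p:ℝ) * (Real.log v - Real.log (p:ℝ)) := by nlinarith
      nlinarith
    have hle := (nice_nn hα).le_omega u p
    rw [show Real.exp u = t from by rw [hu]; exact Real.exp_log ht0, ← gevrey_eq hα] at hle
    have hpu : (p : ℝ) * u = α * ((p : ℝ) * Real.log v) := by
      rw [hlogv]
      field_simp
    have hWge : α * ((p:ℝ) * Real.log v) - Real.log (p.factorial : ℝ) * α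
        ≤ omegaSeq (gevrey α) t := by
      rw [← hpu]
      exact hle
    have hfinal : α * (p:ℝ) ≤ omegaSeq (gevrey α) t := by nlinarith
    -- v < e (p+1) ⇒ v ≤ e * (W/α + 1)
    have hvep : v < Real.exp 1 * ((p:ℝ) + 1) := by
      rw [div_lt_iff₀ he1] at hpge
      linarith [mul_comm ((p:ℝ) + 1) (Real.exp 1)]
    have hdiv : (p:ℝ) ≤ omegaSeq (gevrey α) t / α := by
      rw [le_div_iff₀ hα]
      linarith [mul_comm (omegaSeq (gevrey α) t) α]
    have : v < Real.exp 1 * (omegaSeq (gevrey α) t / α) + Real.exp 1 := by nlinarith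
    have he2 : Real.exp 1 * (omegaSeq (gevrey α) t / α)
        = (Real.exp 1 / α) * omegaSeq (gevrey α) t := by ring
    nlinarith

end OmegaG

end Stmt6Aux

namespace Stmt6Aux

lemma lowerConj_set_nonempty (f τ : ℝ → ℝ) (t : ℝ) :
    {z : ℝ | ∃ s : ℝ, 0 < s ∧ z = f s + τ (t / s)}.Nonempty :=
  ⟨f 1 + τ (t / 1), 1, one_pos, rfl⟩

lemma lowerConj_set_bddBelow (f τ : ℝ → ℝ) (hf : ∀ s, 0 < s → 0 ≤ f s)
    (hτ : ∀ v, 0 ≤ v → 0 ≤ τ v) (t : ℝ) (ht : 0 ≤ t) :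
    BddBelow {z : ℝ | ∃ s : ℝ, 0 < s ∧ z = f s + τ (t / s)} := by
  refine ⟨0, ?_⟩
  rintro z ⟨s, hs, rfl⟩
  exact add_nonneg (hf s hs) (hτ _ (div_nonneg ht hs.le))

lemma lowerConj_nonneg (f τ : ℝ → ℝ) (hf : ∀ s, 0 < s → 0 ≤ f s)
    (hτ : ∀ v, 0 ≤ v → 0 ≤ τ v) (t : ℝ) (ht : 0 ≤ t) : 0 ≤ lowerConj f τ t :=
  le_csInf (lowerConj_set_nonempty f τ t)
    (by rintro z ⟨s, hs, rfl⟩; exact add_nonneg (hf s hs) (hτ _ (div_nonneg ht hs.le)))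

lemma conj_le (f₁ f₂ τ₁ τ₂ : ℝ → ℝ) (C D : ℝ) (hC : 1 ≤ C) (hD : 0 ≤ D)
    (hf₁ : ∀ s, 0 < s → 0 ≤ f₁ s) (hτ₁ : ∀ v, 0 ≤ v → 0 ≤ τ₁ v)
    (hf : ∀ s, 0 < s → f₁ s ≤ C * f₂ s + D) (hτ : ∀ v, 0 ≤ v → τ₁ v ≤ C * τ₂ v + D)
    (t : ℝ) (ht : 0 ≤ t) :
    lowerConj f₁ τ₁ t ≤ C * lowerConj f₂ τ₂ t + 2 * D := by
  have hC0 : (0:ℝ) < C := lt_of_lt_of_le one_pos hC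
  have hkey : ∀ z ∈ {z : ℝ | ∃ s : ℝ, 0 < s ∧ z = f₂ s + τ₂ (t / s)},
      (lowerConj f₁ τ₁ t - 2 * D) / C ≤ z := by
    rintro z ⟨s, hs, rfl⟩
    have h1 : lowerConj f₁ τ₁ t ≤ f₁ s + τ₁ (t / s) :=
      csInf_le (lowerConj_set_bddBelow f₁ τ₁ hf₁ hτ₁ t ht) ⟨s, hs, rfl⟩
    have h2 := hf s hs
    have h3 := hτ (t / s) (div_nonneg ht hs.le)
    rw [div_le_iff₀ hC0]
    nlinarith
  have h := le_csInf (lowerConj_set_nonempty f₂ τ₂ t) hkey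
  rw [div_le_iff₀ hC0] at h
  have : lowerConj f₂ τ₂ t
      = sInf {z : ℝ | ∃ s : ℝ, 0 < s ∧ z = f₂ s + τ₂ (t / s)} := rfl
  rw [← this] at h
  nlinarith [h]

lemma conj_tendsto (f τ : ℝ → ℝ) (hf0 : ∀ s, 0 < s → 0 ≤ f s)
    (hτ0 : ∀ v, 0 ≤ v → 0 ≤ τ v) (hf : Tendsto f atTop atTop)
    (hτ : Tendsto τ atTop atTop) :
    Tendsto (lowerConj f τ) atTop atTop := by
  rw [tendsto_atTop]
  intro R
  obtain ⟨S₀, hS₀⟩ := eventually_atTop.mp (tendsto_atTop.mp hf R)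
  obtain ⟨V, hV⟩ := eventually_atTop.mp (tendsto_atTop.mp hτ R)
  set S₁ := max S₀ 1 with hS₁
  set V₁ := max V 0 with hV₁
  have hS₁0 : (0:ℝ) < S₁ := lt_of_lt_of_le one_pos (le_max_right _ _)
  have hV₁0 : (0:ℝ) ≤ V₁ := le_max_right _ _
  filter_upwards [eventually_ge_atTop (V₁ * S₁)] with t ht
  have ht0 : 0 ≤ t := le_trans (by positivity) ht
  refine le_csInf (lowerConj_set_nonempty f τ t) ?_
  rintro z ⟨s, hs, rfl⟩
  rcases le_or_gt S₁ s with hsS | hsS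
  · have h1 : R ≤ f s := hS₀ s (le_trans (le_max_left _ _) hsS)
    have h2 : 0 ≤ τ (t / s) := hτ0 _ (div_nonneg ht0 hs.le)
    linarith
  · have h1 : V₁ ≤ t / S₁ := by
      rw [le_div_iff₀ hS₁0]
      exact ht
    have h2 : t / S₁ ≤ t / s := div_le_div_of_nonneg_left ht0 hs hsS.le
    have h3 : R ≤ τ (t / s) := hV _ (le_trans (le_max_left V 0) (le_trans h1 h2))
    have h4 : 0 ≤ f s := hf0 s hs
    linarith

lemma isBigO_of_le_affine (f g : ℝ → ℝ) (C D : ℝ) (hC : 0 ≤ C)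
    (hbound : ∀ᶠ t in atTop, f t ≤ C * g t + D)
    (hf : ∀ᶠ t in atTop, 0 ≤ f t) (hg : ∀ᶠ t in atTop, 1 ≤ g t) :
    f =O[atTop] g := by
  rw [isBigO_iff]
  refine ⟨C + |D|, ?_⟩
  filter_upwards [hbound, hf, hg] with t h1 h2 h3
  rw [Real.norm_eq_abs, Real.norm_eq_abs, abs_of_nonneg h2,
    abs_of_nonneg (by linarith : (0:ℝ) ≤ g t)]
  have h4 := le_abs_self D
  nlinarith [abs_nonneg D]

end Stmt6Aux

section
open Stmt6Aux
theorem stmt6 (σ : ℝ → ℝ) (hσ : IsW0 σ) (α : ℝ) (hα : 0 < α) :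
    ∀ ℓ : ℝ, 0 < ℓ →
      (∀ t : ℝ, 0 ≤ t →
        omegaSeq (fun p => assocSeq σ ℓ p * gevrey α p) t
          = lowerConj (omegaSeq (assocSeq σ ℓ)) (omegaSeq (gevrey α)) t) ∧
      WeightEquiv (omegaSeq (fun p => assocSeq σ ℓ p * gevrey α p))
        (lowerConj σ (omegaSeq (gevrey α))) ∧
      WeightEquiv (lowerConj σ (omegaSeq (gevrey α)))
        (lowerConj σ (fun t : ℝ => t ^ (1 / α))) := by
  intro ℓ hℓ
  have hniceM := nice_mm hσ hℓ
  have hniceN := nice_nn hα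
  have hge := gevrey_eq hα
  have hσ0 : ∀ s : ℝ, 0 < s → 0 ≤ σ s := fun s _ => hσ.1.1 s
  have hG0 : ∀ v : ℝ, 0 ≤ v → 0 ≤ omegaSeq (gevrey α) v := omegaG_nonneg hα
  have hS0 : ∀ s : ℝ, 0 < s → 0 ≤ omegaSeq (assocSeq σ ℓ) s := omegaS_nonneg hσ hℓ
  have hGtend : Tendsto (omegaSeq (gevrey α)) atTop atTop := by
    refine tendsto_atTop_mono' atTop ?_ Real.tendsto_log_atTop
    filter_upwards [eventually_ge_atTop (1:ℝ)] with t ht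
    exact omegaG_ge_log hα t ht
  have htend2 : Tendsto (lowerConj σ (omegaSeq (gevrey α))) atTop atTop :=
    conj_tendsto σ _ hσ0 hG0 hσ.1.2.2 hGtend
  have hev2 : ∀ᶠ t in atTop, 1 ≤ lowerConj σ (omegaSeq (gevrey α)) t :=
    htend2.eventually_ge_atTop 1
  have hnn2 : ∀ᶠ t in atTop, 0 ≤ lowerConj σ (omegaSeq (gevrey α)) t := by
    filter_upwards [hev2] with t h
    linarith
  -- Part 1 : the pointwise identity
  have hpt : ∀ t : ℝ, 0 ≤ t →
      omegaSeq (fun p => assocSeq σ ℓ p * gevrey α p) t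
        = lowerConj (omegaSeq (assocSeq σ ℓ)) (omegaSeq (gevrey α)) t := by
    intro t ht
    have h := omega_prod hniceM hniceN t ht
    have hgg : (fun p => assocSeq σ ℓ p * gevrey α p)
        = fun p : ℕ => Real.exp ((1/ℓ) * phiStar σ (ℓ * (p:ℝ)))
            * Real.exp (Real.log (p.factorial : ℝ) * α) := by
      funext p
      rw [hge]
      rfl
    rw [hgg, hge]
    exact h
  refine ⟨hpt, ?_, ?_⟩
  · -- Part 2
    -- reverse bound : σ ≤ 2ℓ ω_S + D
    have hrev : ∃ D : ℝ, 0 ≤ D ∧ ∀ s : ℝ, 0 < s →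
        σ s ≤ (2*ℓ) * omegaSeq (assocSeq σ ℓ) s + D := by
      have hlo := hσ.2.2.2.1
      rw [isLittleO_iff] at hlo
      obtain ⟨T, hT⟩ := eventually_atTop.mp (hlo (show (0:ℝ) < 1/(2*ℓ) by positivity))
      set T₁ := max T 1 with hT₁
      refine ⟨σ T₁, hσ.1.1 T₁, fun s hs => ?_⟩
      rcases le_or_gt T₁ s with hsT | hsT
      · have h1 := hT s (le_trans (le_max_left _ _) hsT)
        have hs1 : (1:ℝ) ≤ s := le_trans (le_max_right _ _) hsT
        rw [Real.norm_eq_abs, Real.norm_eq_abs, abs_of_nonneg (Real.log_nonneg hs1),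
          abs_of_nonneg (hσ.1.1 s)] at h1
        have h2 := omegaS_ge hσ hℓ s hs1
        have e1 : σ s / ℓ - 1/(2*ℓ) * σ s = σ s / (2*ℓ) := by
          field_simp
          ring
        have h3 : σ s / (2*ℓ) ≤ omegaSeq (assocSeq σ ℓ) s := by linarith [e1 ▸ (by linarith : σ s / ℓ - 1/(2*ℓ) * σ s ≤ omegaSeq (assocSeq σ ℓ) s)]
        have h4 := (div_le_iff₀ (by positivity : (0:ℝ) < 2*ℓ)).mp h3
        have h5 := hσ.1.1 T₁
        nlinarith [h4]
      · have h1 : σ s ≤ σ T₁ := hσ.1.2.1 hs.le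
          (le_trans hs.le hsT.le) hsT.le
        have h2 := omegaS_nonneg hσ hℓ s hs
        nlinarith
    obtain ⟨D, hD0, hDrev⟩ := hrev
    set C : ℝ := max (max 1 (1/ℓ)) (2*ℓ) with hCdef
    have hC1 : (1:ℝ) ≤ C := le_trans (le_max_left 1 (1/ℓ)) (le_max_left _ _)
    have hC0 : (0:ℝ) < C := lt_of_lt_of_le one_pos hC1
    have hτid : ∀ v : ℝ, 0 ≤ v → omegaSeq (gevrey α) v
        ≤ C * omegaSeq (gevrey α) v + D := by
      intro v hv
      have := hG0 v hv
      nlinarith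
    have h12 : ∀ t : ℝ, 0 ≤ t →
        lowerConj (omegaSeq (assocSeq σ ℓ)) (omegaSeq (gevrey α)) t
          ≤ C * lowerConj σ (omegaSeq (gevrey α)) t + 2 * D := by
      intro t ht
      refine conj_le _ _ _ _ C D hC1 hD0 hS0 hG0 (fun s hs => ?_) hτid t ht
      have h1 := omegaS_le hσ hℓ s hs
      have h2 : max 1 (1/ℓ) ≤ C := le_max_left _ _
      have h3 := hσ.1.1 s
      nlinarith
    have h21 : ∀ t : ℝ, 0 ≤ t →
        lowerConj σ (omegaSeq (gevrey α)) t
          ≤ C * lowerConj (omegaSeq (assocSeq σ ℓ)) (omegaSeq (gevrey α)) t + 2 * D := by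
      intro t ht
      refine conj_le _ _ _ _ C D hC1 hD0 hσ0 hG0 (fun s hs => ?_) hτid t ht
      have h1 := hDrev s hs
      have h2 : 2*ℓ ≤ C := le_max_right _ _
      have h3 := hS0 s hs
      nlinarith
    have hev1 : ∀ᶠ t in atTop,
        1 ≤ lowerConj (omegaSeq (assocSeq σ ℓ)) (omegaSeq (gevrey α)) t := by
      filter_upwards [htend2.eventually_ge_atTop (C + 2*D), eventually_ge_atTop (0:ℝ)]
        with t h1 h2
      have h3 := h21 t h2
      have h4 : C * 1 ≤ C * lowerConj (omegaSeq (assocSeq σ ℓ)) (omegaSeq (gevrey α)) t := by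
        linarith
      exact (mul_le_mul_iff_right₀ hC0).mp h4
    have hnn1 : ∀ᶠ t in atTop,
        0 ≤ lowerConj (omegaSeq (assocSeq σ ℓ)) (omegaSeq (gevrey α)) t := by
      filter_upwards [hev1] with t h
      linarith
    have hEq : (omegaSeq (fun p => assocSeq σ ℓ p * gevrey α p))
        =ᶠ[atTop] (lowerConj (omegaSeq (assocSeq σ ℓ)) (omegaSeq (gevrey α))) := by
      filter_upwards [eventually_ge_atTop (0:ℝ)] with t ht
      exact hpt t ht
    have hO1 : (lowerConj (omegaSeq (assocSeq σ ℓ)) (omegaSeq (gevrey α)))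
        =O[atTop] (lowerConj σ (omegaSeq (gevrey α))) := by
      refine isBigO_of_le_affine _ _ C (2*D) (le_of_lt hC0) ?_ hnn1 hev2
      filter_upwards [eventually_ge_atTop (0:ℝ)] with t ht
      exact h12 t ht
    have hO2 : (lowerConj σ (omegaSeq (gevrey α)))
        =O[atTop] (lowerConj (omegaSeq (assocSeq σ ℓ)) (omegaSeq (gevrey α))) := by
      refine isBigO_of_le_affine _ _ C (2*D) (le_of_lt hC0) ?_ hnn2 hev1
      filter_upwards [eventually_ge_atTop (0:ℝ)] with t ht
      exact h21 t ht
    exact ⟨hEq.trans_isBigO hO1, hO2.trans_eventuallyEq hEq.symm⟩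
  · -- Part 3
    have hrp0 : ∀ v : ℝ, 0 ≤ v → 0 ≤ v ^ (1/α) := fun v hv => Real.rpow_nonneg hv _
    set C : ℝ := max (max 1 α) (Real.exp 1 / α) with hCdef
    have hC1 : (1:ℝ) ≤ C := le_trans (le_max_left 1 α) (le_max_left _ _)
    have hC0 : (0:ℝ) < C := lt_of_lt_of_le one_pos hC1
    set D : ℝ := 2 * Real.exp 1 with hDdef
    have hD0 : (0:ℝ) ≤ D := by positivity
    have hfid : ∀ s : ℝ, 0 < s → σ s ≤ C * σ s + D := by
      intro s hs
      have := hσ.1.1 s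
      nlinarith
    have hGle : ∀ v : ℝ, 0 ≤ v → omegaSeq (gevrey α) v ≤ C * v ^ (1/α) + D := by
      intro v hv
      rcases eq_or_lt_of_le hv with rfl | hv0
      · rw [omegaG_zero hα]
        have := hrp0 0 le_rfl
        nlinarith
      · have h1 := omegaG_le hα v hv0
        have h2 : α ≤ C := le_trans (le_max_right 1 α) (le_max_left _ _)
        have h3 := hrp0 v hv
        nlinarith
    have hGge : ∀ v : ℝ, 0 ≤ v → v ^ (1/α) ≤ C * omegaSeq (gevrey α) v + D := by
      intro v hv
      have h1 := omegaG_rpow_le hα v hv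
      have h2 : Real.exp 1 / α ≤ C := le_max_right _ _
      have h3 := hG0 v hv
      nlinarith
    have h23 : ∀ t : ℝ, 0 ≤ t →
        lowerConj σ (omegaSeq (gevrey α)) t
          ≤ C * lowerConj σ (fun v : ℝ => v ^ (1/α)) t + 2 * D := by
      intro t ht
      exact conj_le _ _ _ _ C D hC1 hD0 hσ0 hG0 hfid hGle t ht
    have h32 : ∀ t : ℝ, 0 ≤ t →
        lowerConj σ (fun v : ℝ => v ^ (1/α)) t
          ≤ C * lowerConj σ (omegaSeq (gevrey α)) t + 2 * D := by
      intro t ht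
      exact conj_le _ _ _ _ C D hC1 hD0 hσ0 hrp0 hfid hGge t ht
    have htend3 : Tendsto (lowerConj σ (fun v : ℝ => v ^ (1/α))) atTop atTop :=
      conj_tendsto σ _ hσ0 hrp0 hσ.1.2.2 (tendsto_rpow_atTop (by positivity))
    have hev3 : ∀ᶠ t in atTop, 1 ≤ lowerConj σ (fun v : ℝ => v ^ (1/α)) t :=
      htend3.eventually_ge_atTop 1
    have hnn3 : ∀ᶠ t in atTop, 0 ≤ lowerConj σ (fun v : ℝ => v ^ (1/α)) t := by
      filter_upwards [hev3] with t h
      linarith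
    constructor
    · refine isBigO_of_le_affine _ _ C (2*D) (le_of_lt hC0) ?_ hnn2 hev3
      filter_upwards [eventually_ge_atTop (0:ℝ)] with t ht
      exact h23 t ht
    · refine isBigO_of_le_affine _ _ C (2*D) (le_of_lt hC0) ?_ hnn3 hev2
      filter_upwards [eventually_ge_atTop (0:ℝ)] with t ht
      exact h32 t ht

end
end
end
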